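/- arXiv:1410.1202 — 7 statements merged into one kernel-verified Lean document; each statement's English description precedes it below -/
import Mathlib

section
/- Let λ < 0 and ε > 0 be real numbers with λ + 6ε < 0, let s := Σ_{m≥0} e^{m(λ+6ε)}, and assume s·e^{2ε}·(e^ε − 1) ≤ 1/2 and e^{λ}·(e^ε − 1) ≤ 1. Set c := e^{λ}·(e^ε − 1)/24. Let (q_n)_{n≥0} be a sequence of real numbers with 0 < q_n ≤ 1 and e^{−ε}·q_n ≤ q_{n+1} ≤ e^{ε}·q_n for all n. For each n ≥ 0 let F_n : D(q_n) → D(q_{n+1}) be a holomorphic map with F_n(0) = 0, and set m_n := F_n'(0); assume e^{λ−ε} ≤ |m_n| ≤ e^{λ+ε}. Then there exists a family of injective holomorphic maps η_n : D(c·q_n) → D(q_n) such that η_n(0) = 0, η_n'(0) = 1, and for every n ≥ 0 and every z ∈ D(c·q_n) one has m_n·z ∈ D(c·q_{n+1}) and F_n(η_n(z)) = η_{n+1}(m_n·z). -/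
/-!
Following Koenigs, put `ψ n z = lim_k (m n ⋯ m (n+k-1))⁻¹ (F (n+k-1) ∘ ⋯ ∘ F n) z`. By the
Schwarz lemma `F j w = m j w + O(‖w‖² / q j)`, so on the disc of radius `ρ q n`,
`ρ = e^λ (e^ε - 1) / 2`, orbits contract at rate `e^(λ+2ε)` while the radii shrink at rate at
most `e^(-ε)`. Consecutive terms therefore differ by `O(‖z‖² e^(k(λ+6ε)) / q n)`: the limit
exists, is holomorphic, satisfies `ψ (n+1) ∘ F n = m n * ψ n`, and, by the choice of `s`, obeys
`‖ψ n z - z‖ ≤ ‖z‖² / (2 ρ q n)`. Cauchy estimates then give `‖deriv (ψ n) - 1‖ ≤ 1/2` on the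
disc of radius `ρ q n / 6`, where `ψ n` is injective and covers the disc of radius
`ρ q n / 12 = c q n`; the inverse `η n` conjugates `F n` to `z ↦ m n z`.
-/

open Metric Set Filter Finset Function
open scoped Topology NNReal

theorem sub_sub_deriv_mul_eq_sq_mul_dslope_dslope (f : ℂ → ℂ) (z : ℂ) :
    f z - f 0 - deriv f 0 * z = z ^ 2 * dslope (dslope f 0) 0 z := by
  have h₁ := sub_smul_dslope f 0 z
  have h₂ := sub_smul_dslope (dslope f 0) 0 z
  rw [dslope_same] at h₂
  simp only [sub_zero, smul_eq_mul] at h₁ h₂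
  linear_combination -h₁ - z * h₂

theorem norm_sub_deriv_mul_le_of_mapsTo_ball {f : ℂ → ℂ} {R C : ℝ}
    (hf : DifferentiableOn ℂ f (ball 0 R)) (hmaps : MapsTo f (ball 0 R) (closedBall 0 C))
    (hf0 : f 0 = 0) {z : ℂ} (hz : z ∈ ball 0 R) :
    ‖f z - deriv f 0 * z‖ ≤ 2 * C / R ^ 2 * ‖z‖ ^ 2 := by
  have hR := pos_of_mem_ball hz
  have hslope : ∀ w ∈ ball (0 : ℂ) R, ‖dslope f 0 w‖ ≤ C / R := fun w hw =>
    Complex.norm_dslope_le_div_of_mapsTo_ball hf (by rwa [hf0]) hw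
  have hmaps' : MapsTo (dslope f 0) (ball 0 R) (closedBall (dslope f 0 0) (2 * C / R)) :=
    fun w hw => by
      rw [mem_closedBall, dist_eq_norm, mul_div_assoc, two_mul]
      exact (norm_sub_le _ _).trans (add_le_add (hslope w hw) (hslope 0 (mem_ball_self hR)))
  have h := Complex.norm_dslope_le_div_of_mapsTo_ball
    ((Complex.differentiableOn_dslope (ball_mem_nhds 0 hR)).2 hf) hmaps' hz
  have hid := sub_sub_deriv_mul_eq_sq_mul_dslope_dslope f z
  rw [hf0, sub_zero] at hid
  rw [hid, norm_mul, norm_pow, mul_comm]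
  calc ‖dslope (dslope f 0) 0 z‖ * ‖z‖ ^ 2 ≤ 2 * C / R / R * ‖z‖ ^ 2 := by gcongr
    _ = 2 * C / R ^ 2 * ‖z‖ ^ 2 := by ring

theorem hasDerivAt_zero_of_norm_le_mul_sq {𝕜 E : Type*} [NontriviallyNormedField 𝕜]
    [NormedAddCommGroup E] [NormedSpace 𝕜 E] {u : 𝕜 → E} {K : ℝ}
    (hu : ∀ᶠ z in 𝓝 0, ‖u z‖ ≤ K * ‖z‖ ^ 2) : HasDerivAt u 0 0 := by
  have hu0 : u 0 = 0 := norm_le_zero_iff.1 (by simpa using hu.self_of_nhds)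
  rw [hasDerivAt_iff_isLittleO_nhds_zero]
  simp only [zero_add, hu0, sub_zero, smul_zero]
  refine (Asymptotics.IsBigO.of_bound K ?_).trans_isLittleO
    (Asymptotics.isLittleO_pow_id one_lt_two)
  simpa only [norm_pow] using hu

theorem norm_dslope_dslope_le_of_norm_le_mul_sq {u : ℂ → ℂ} {R K : ℝ}
    (hu : DifferentiableOn ℂ u (ball 0 R)) (hK : ∀ z ∈ ball (0 : ℂ) R, ‖u z‖ ≤ K * ‖z‖ ^ 2)
    {w : ℂ} (hw : w ∈ ball 0 R) : ‖dslope (dslope u 0) 0 w‖ ≤ K := by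
  have hR := pos_of_mem_ball hw
  have hball : ball (0 : ℂ) R ∈ 𝓝 0 := ball_mem_nhds 0 hR
  have hK0 : 0 ≤ K := by
    have hw : ‖((R / 2 : ℝ) : ℂ)‖ = R / 2 := by simp [abs_of_pos hR]
    have := hK ((R / 2 : ℝ) : ℂ) (by rw [mem_ball_zero_iff, hw]; linarith)
    rw [hw] at this
    nlinarith [norm_nonneg (u ((R / 2 : ℝ) : ℂ)), mul_pos hR hR]
  have hu0 : u 0 = 0 := norm_le_zero_iff.1 (by simpa using hK 0 (mem_ball_self hR))
  have hd0 : deriv u 0 = 0 :=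
    (hasDerivAt_zero_of_norm_le_mul_sq (Filter.mem_of_superset hball hK)).deriv
  -- Two Schwarz lemmas: `‖dslope u 0‖ ≤ K R` because `‖u‖ ≤ K R²`, and then the bound `K`
  -- because `dslope u 0` vanishes at `0`.
  have hv_le : ∀ y ∈ ball (0 : ℂ) R, ‖dslope u 0 y‖ ≤ K * R := fun y hy => by
    refine (Complex.norm_dslope_le_div_of_mapsTo_ball hu (R₂ := K * R ^ 2) (fun x hx => ?_)
      hy).trans_eq (by field_simp)
    rw [mem_closedBall, hu0, dist_zero_right]
    exact (hK x hx).trans (by gcongr; exact (mem_ball_zero_iff.1 hx).le)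
  refine (Complex.norm_dslope_le_div_of_mapsTo_ball ((Complex.differentiableOn_dslope hball).2 hu)
    (R₂ := K * R) (fun y hy => ?_) hw).trans_eq (by field_simp)
  rw [mem_closedBall, dslope_same, hd0, dist_zero_right]
  exact hv_le y hy

theorem norm_deriv_le_of_norm_le_mul_sq {u : ℂ → ℂ} {R K : ℝ} (hR : 0 < R)
    (hu : DifferentiableOn ℂ u (ball 0 R)) (hK : ∀ z ∈ ball (0 : ℂ) R, ‖u z‖ ≤ K * ‖z‖ ^ 2)
    {z : ℂ} (hz : z ∈ closedBall 0 (R / 6)) : ‖deriv u z‖ ≤ K * R / 2 := by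
  have hz' : ‖z‖ ≤ R / 6 := by simpa using hz
  have hball : ball (0 : ℂ) R ∈ 𝓝 0 := ball_mem_nhds 0 hR
  set g := dslope (dslope u 0) 0
  have hg : DifferentiableOn ℂ g (ball 0 R) :=
    (Complex.differentiableOn_dslope hball).2 ((Complex.differentiableOn_dslope hball).2 hu)
  have hg_le : ∀ w ∈ ball (0 : ℂ) R, ‖g w‖ ≤ K := fun w hw =>
    norm_dslope_dslope_le_of_norm_le_mul_sq hu hK hw
  have hsub : ball z (5 * R / 6) ⊆ ball 0 R := ball_subset_ball' (by rw [dist_zero_right]; linarith)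
  have hzR : z ∈ ball (0 : ℂ) R := hsub (mem_ball_self (by linarith))
  have hg' : ‖deriv g z‖ ≤ 2 * K / (5 * R / 6) :=
    Complex.norm_deriv_le_div_of_mapsTo_ball (hg.mono hsub) (fun w hw => by
      rw [mem_closedBall, dist_eq_norm, two_mul]
      exact (norm_sub_le _ _).trans (add_le_add (hg_le w (hsub hw)) (hg_le z hzR)))
      (by linarith)
  have hu0 : u 0 = 0 := norm_le_zero_iff.1 (by simpa using hK 0 (mem_ball_self hR))
  have hd0 : deriv u 0 = 0 :=
    (hasDerivAt_zero_of_norm_le_mul_sq (Filter.mem_of_superset hball hK)).deriv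
  have hu_eq : u = fun w => w ^ 2 * g w := funext fun w => by
    simpa [hu0, hd0] using sub_sub_deriv_mul_eq_sq_mul_dslope_dslope u w
  have hderiv : deriv u z = 2 * z * g z + z ^ 2 * deriv g z := by
    rw [hu_eq]
    exact (((hasDerivAt_pow 2 z).mul
      (hg.differentiableAt (isOpen_ball.mem_nhds hzR)).hasDerivAt).deriv).trans (by ring)
  have hK0 : 0 ≤ K := (norm_nonneg _).trans (hg_le z hzR)
  rw [hderiv]
  calc ‖2 * z * g z + z ^ 2 * deriv g z‖ ≤ 2 * ‖z‖ * ‖g z‖ + ‖z‖ ^ 2 * ‖deriv g z‖ := by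
        refine (norm_add_le _ _).trans_eq ?_
        simp [norm_pow]
    _ ≤ 2 * (R / 6) * K + (R / 6) ^ 2 * (2 * K / (5 * R / 6)) := by gcongr; exact hg_le z hzR
    _ ≤ K * R / 2 := by
        field_simp
        nlinarith

theorem approximatesLinearOn_refl_of_norm_deriv_sub_one_le {ψ : ℂ → ℂ} {s : Set ℂ} {k : ℝ≥0}
    (hs : Convex ℝ s) (hd : ∀ z ∈ s, DifferentiableAt ℂ ψ z)
    (hk : ∀ z ∈ s, ‖deriv ψ z - 1‖ ≤ k) :
    ApproximatesLinearOn ψ (ContinuousLinearEquiv.refl ℂ ℂ : ℂ →L[ℂ] ℂ) s k := fun x hx y hy => by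
  have hφ : ∀ z ∈ s, HasDerivWithinAt (fun w => ψ w - w) (deriv ψ z - 1) s z := fun z hz =>
    ((hd z hz).hasDerivAt.sub (hasDerivAt_id z)).hasDerivWithinAt
  simpa [sub_sub_sub_comm] using hs.norm_image_sub_le_of_norm_hasDerivWithin_le hφ hk hy hx

section RightInverse

variable {ψ : ℂ → ℂ} {r : ℝ}

theorem nnnorm_refl_symm_inv_eq_one :
    ‖((ContinuousLinearEquiv.refl ℂ ℂ).symm : ℂ →L[ℂ] ℂ)‖₊⁻¹ = 1 := by
  simp

theorem surjOn_closedBall_of_approximatesLinearOn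
    (hψ : ApproximatesLinearOn ψ (ContinuousLinearEquiv.refl ℂ ℂ : ℂ →L[ℂ] ℂ)
      (closedBall 0 (2 * r)) (1 / 2))
    (hr : 0 ≤ r) (hψ0 : ψ 0 = 0) : SurjOn ψ (closedBall 0 (2 * r)) (closedBall 0 r) := by
  have := hψ.surjOn_closedBall_of_nonlinearRightInverse
    (ContinuousLinearEquiv.refl ℂ ℂ).toNonlinearRightInverse (by linarith) subset_rfl
  have hN : ((ContinuousLinearEquiv.refl ℂ ℂ).toNonlinearRightInverse.nnnorm : ℝ)⁻¹ = 1 := by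
    simp [ContinuousLinearEquiv.toNonlinearRightInverse]
  have hr' : (1 - ((1 / 2 : ℝ≥0) : ℝ)) * (2 * r) = r := by norm_num; ring
  rwa [hN, hψ0, hr'] at this

theorem injOn_of_approximatesLinearOn {s : Set ℂ}
    (hψ : ApproximatesLinearOn ψ (ContinuousLinearEquiv.refl ℂ ℂ : ℂ →L[ℂ] ℂ) s (1 / 2)) :
    InjOn ψ s :=
  hψ.injOn (Or.inr (by rw [nnnorm_refl_symm_inv_eq_one]; norm_num))

theorem continuousOn_invFunOn_of_approximatesLinearOn
    (hψ : ApproximatesLinearOn ψ (ContinuousLinearEquiv.refl ℂ ℂ : ℂ →L[ℂ] ℂ)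
      (closedBall 0 (2 * r)) (1 / 2))
    (hr : 0 ≤ r) (hψ0 : ψ 0 = 0) :
    ContinuousOn (invFunOn ψ (closedBall 0 (2 * r))) (closedBall 0 r) :=
  -- `(hψ.toPartialEquiv _).symm` is `invFunOn ψ _` by definition.
  (hψ.inverse_continuousOn (Or.inr (by rw [nnnorm_refl_symm_inv_eq_one]; norm_num))).mono
    (surjOn_closedBall_of_approximatesLinearOn hψ hr hψ0)

theorem hasDerivAt_invFunOn_of_approximatesLinearOn
    (hψ : ApproximatesLinearOn ψ (ContinuousLinearEquiv.refl ℂ ℂ : ℂ →L[ℂ] ℂ)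
      (closedBall 0 (2 * r)) (1 / 2))
    (hψ0 : ψ 0 = 0) {z ψ' : ℂ} (hz : z ∈ ball 0 r)
    (hψ' : HasDerivAt ψ ψ' (invFunOn ψ (closedBall 0 (2 * r)) z)) (hψ'0 : ψ' ≠ 0) :
    HasDerivAt (invFunOn ψ (closedBall 0 (2 * r))) ψ'⁻¹ z := by
  have hr : 0 ≤ r := (pos_of_mem_ball hz).le
  have hsurj := surjOn_closedBall_of_approximatesLinearOn hψ hr hψ0
  refine hψ'.of_local_left_inverse ?_ hψ'0 ?_
  · exact (continuousOn_invFunOn_of_approximatesLinearOn hψ hr hψ0).continuousAt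
      (mem_of_superset (isOpen_ball.mem_nhds hz) ball_subset_closedBall)
  · filter_upwards [isOpen_ball.mem_nhds hz] with w hw
    exact hsurj.rightInvOn_invFunOn (ball_subset_closedBall hw)

end RightInverse

def orbit {α : Type*} (F : ℕ → α → α) (n : ℕ) : ℕ → α → α
  | 0 => id
  | k + 1 => F (n + k) ∘ orbit F n k

namespace orbit

variable {α : Type*} {F : ℕ → α → α}

@[simp]
theorem zero_apply (n : ℕ) (z : α) : orbit F n 0 z = z := rfl

theorem succ_apply' (n k : ℕ) (z : α) : orbit F n (k + 1) z = F (n + k) (orbit F n k z) := rfl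

theorem succ_apply (n k : ℕ) (z : α) : orbit F n (k + 1) z = orbit F (n + 1) k (F n z) := by
  induction k with
  | zero => rfl
  | succ k ih => rw [succ_apply', ih, succ_apply', Nat.add_right_comm, Nat.add_assoc]

theorem mapsTo {S : ℕ → Set α} (hF : ∀ n, MapsTo (F n) (S n) (S (n + 1))) (n k : ℕ) :
    MapsTo (orbit F n k) (S n) (S (n + k)) := by
  induction k with
  | zero => exact mapsTo_id _
  | succ k ih => exact (hF (n + k)).comp ih

theorem norm_le {E : Type*} [SeminormedAddGroup E] {F : ℕ → E → E} {S : ℕ → Set E} {a : ℝ}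
    (hF : ∀ n, MapsTo (F n) (S n) (S (n + 1))) (ha : 0 ≤ a)
    (hFa : ∀ n, ∀ w ∈ S n, ‖F n w‖ ≤ a * ‖w‖) (n k : ℕ) {z : E} (hz : z ∈ S n) :
    ‖orbit F n k z‖ ≤ a ^ k * ‖z‖ := by
  induction k with
  | zero => simp
  | succ k ih =>
    calc ‖orbit F n (k + 1) z‖ ≤ a * ‖orbit F n k z‖ := hFa _ _ (mapsTo hF n k hz)
      _ ≤ a * (a ^ k * ‖z‖) := by gcongr
      _ = a ^ (k + 1) * ‖z‖ := by ring

theorem differentiableOn {𝕜 E : Type*} [NontriviallyNormedField 𝕜] [NormedAddCommGroup E]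
    [NormedSpace 𝕜 E] {F : ℕ → E → E} {S : ℕ → Set E}
    (hF : ∀ n, MapsTo (F n) (S n) (S (n + 1))) (hd : ∀ n, DifferentiableOn 𝕜 (F n) (S n))
    (n k : ℕ) : DifferentiableOn 𝕜 (orbit F n k) (S n) := by
  induction k with
  | zero => exact differentiableOn_id
  | succ k ih => exact (hd (n + k)).comp ih (mapsTo hF n k)

end orbit

theorem Summable.tendsto_atTop_add_tsum_sub {E : Type*} [AddCommGroup E] [TopologicalSpace E]
    [IsTopologicalAddGroup E] {f : ℕ → E} (hf : Summable fun k => f (k + 1) - f k) :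
    Tendsto f atTop (𝓝 (f 0 + ∑' k, (f (k + 1) - f k))) := by
  refine (tendsto_const_nhds.add hf.hasSum.tendsto_sum_nat).congr fun K => ?_
  rw [sum_range_sub, add_sub_cancel]

noncomputable def normalizedOrbit (F : ℕ → ℂ → ℂ) (m : ℕ → ℂ) (n k : ℕ) (z : ℂ) : ℂ :=
  orbit F n k z / ∏ j ∈ range k, m (n + j)

-- The limit of `normalizedOrbit F m n k`, written as a telescoping series so that bounds and
-- holomorphy pass to the limit.
noncomputable def koenigs (F : ℕ → ℂ → ℂ) (m : ℕ → ℂ) (n : ℕ) (z : ℂ) : ℂ :=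
  z + ∑' k, (normalizedOrbit F m n (k + 1) z - normalizedOrbit F m n k z)

@[simp]
theorem normalizedOrbit_zero (F : ℕ → ℂ → ℂ) (m : ℕ → ℂ) (n : ℕ) (z : ℂ) :
    normalizedOrbit F m n 0 z = z := by
  simp [normalizedOrbit]

theorem normalizedOrbit_succ_sub {F : ℕ → ℂ → ℂ} {m : ℕ → ℂ} (hm : ∀ n, m n ≠ 0) (n k : ℕ)
    (z : ℂ) : normalizedOrbit F m n (k + 1) z - normalizedOrbit F m n k z =
      (F (n + k) (orbit F n k z) - m (n + k) * orbit F n k z) / ∏ j ∈ range (k + 1), m (n + j) := by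
  have hP : ∏ j ∈ range k, m (n + j) ≠ 0 := prod_ne_zero_iff.2 fun j _ => hm _
  rw [normalizedOrbit, normalizedOrbit, orbit.succ_apply', prod_range_succ]
  field_simp [hm (n + k)]

theorem normalizedOrbit_succ_apply {F : ℕ → ℂ → ℂ} {m : ℕ → ℂ} (hm : ∀ n, m n ≠ 0) (n k : ℕ)
    (z : ℂ) : normalizedOrbit F m (n + 1) k (F n z) = m n * normalizedOrbit F m n (k + 1) z := by
  rw [normalizedOrbit, normalizedOrbit, orbit.succ_apply, prod_range_succ']
  simp only [add_zero, Nat.add_right_comm, Nat.add_assoc]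
  field_simp [hm n]

-- `a` bounds the one-step contraction on `ball 0 (r n)`, `θ` is the ratio of the series defining
-- `koenigs`, and `le_mul_one_sub` keeps `koenigs` close enough to the identity to be inverted.
structure IsTemperedPerturbation (F : ℕ → ℂ → ℂ) (m : ℕ → ℂ) (r : ℕ → ℝ) (a b B τ θ : ℝ) :
    Prop where
  r_pos : ∀ n, 0 < r n
  differentiableOn : ∀ n, DifferentiableOn ℂ (F n) (ball 0 (r n))
  norm_sub_mul_le : ∀ n, ∀ w ∈ ball (0 : ℂ) (r n), ‖F n w - m n * w‖ ≤ B / r n * ‖w‖ ^ 2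
  B_nonneg : 0 ≤ B
  b_pos : 0 < b
  le_norm : ∀ n, b ≤ ‖m n‖
  norm_add_le : ∀ n, ‖m n‖ + B ≤ a
  mul_le : ∀ n, a * r n ≤ r (n + 1)
  le_mul : ∀ n, r n ≤ τ * r (n + 1)
  ratio_le : τ * a ^ 2 / b ≤ θ
  theta_lt_one : θ < 1
  le_mul_one_sub : B ≤ b * (1 - θ)

namespace IsTemperedPerturbation

variable {F : ℕ → ℂ → ℂ} {m : ℕ → ℂ} {r : ℕ → ℝ} {a b B τ θ : ℝ}

theorem m_ne_zero (h : IsTemperedPerturbation F m r a b B τ θ) (n : ℕ) : m n ≠ 0 :=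
  norm_pos_iff.1 (h.b_pos.trans_le (h.le_norm n))

theorem norm_le (h : IsTemperedPerturbation F m r a b B τ θ) (n : ℕ) : ‖m n‖ ≤ a := by
  linarith [h.norm_add_le n, h.B_nonneg]

theorem a_pos (h : IsTemperedPerturbation F m r a b B τ θ) : 0 < a := by
  linarith [h.b_pos, h.le_norm 0, h.norm_le 0]

theorem tau_nonneg (h : IsTemperedPerturbation F m r a b B τ θ) : 0 ≤ τ :=
  nonneg_of_mul_nonneg_left ((h.r_pos 0).le.trans (h.le_mul 0)) (h.r_pos 1)

theorem theta_nonneg (h : IsTemperedPerturbation F m r a b B τ θ) : 0 ≤ θ :=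
  (div_nonneg (mul_nonneg h.tau_nonneg (sq_nonneg a)) h.b_pos.le).trans h.ratio_le

theorem norm_apply_le (h : IsTemperedPerturbation F m r a b B τ θ) {n : ℕ} {w : ℂ}
    (hw : w ∈ ball 0 (r n)) : ‖F n w‖ ≤ a * ‖w‖ := by
  have hquad : B / r n * ‖w‖ ^ 2 ≤ B * ‖w‖ := by
    rw [div_mul_eq_mul_div, div_le_iff₀ (h.r_pos n), sq, ← mul_assoc]
    exact mul_le_mul_of_nonneg_left (mem_ball_zero_iff.1 hw).le
      (mul_nonneg h.B_nonneg (norm_nonneg w))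
  calc ‖F n w‖ ≤ ‖m n * w‖ + ‖F n w - m n * w‖ := norm_le_insert' _ _
    _ ≤ ‖m n‖ * ‖w‖ + B * ‖w‖ := by
        rw [norm_mul]
        gcongr
        exact (h.norm_sub_mul_le n w hw).trans hquad
    _ ≤ a * ‖w‖ := by
        rw [← add_mul]
        exact mul_le_mul_of_nonneg_right (h.norm_add_le n) (norm_nonneg w)

theorem mapsTo (h : IsTemperedPerturbation F m r a b B τ θ) (n : ℕ) :
    MapsTo (F n) (ball 0 (r n)) (ball 0 (r (n + 1))) := fun w hw => by
  rw [mem_ball_zero_iff] at hw ⊢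
  calc ‖F n w‖ ≤ a * ‖w‖ := h.norm_apply_le (mem_ball_zero_iff.2 hw)
    _ < a * r n := mul_lt_mul_of_pos_left hw h.a_pos
    _ ≤ r (n + 1) := h.mul_le n

theorem le_pow_mul (h : IsTemperedPerturbation F m r a b B τ θ) (n k : ℕ) :
    r n ≤ τ ^ k * r (n + k) := by
  have hτ := h.tau_nonneg
  induction k with
  | zero => simp
  | succ k ih =>
    calc r n ≤ τ ^ k * r (n + k) := ih
      _ ≤ τ ^ k * (τ * r (n + k + 1)) := by gcongr; exact h.le_mul _
      _ = τ ^ (k + 1) * r (n + (k + 1)) := by rw [pow_succ, ← Nat.add_assoc]; ring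

theorem pow_le_norm_prod (h : IsTemperedPerturbation F m r a b B τ θ) (n k : ℕ) :
    b ^ k ≤ ‖∏ j ∈ range k, m (n + j)‖ :=
  calc b ^ k = ∏ _j ∈ range k, b := by rw [prod_const, card_range]
    _ ≤ ∏ j ∈ range k, ‖m (n + j)‖ :=
      prod_le_prod (fun _ _ => h.b_pos.le) fun j _ => h.le_norm (n + j)
    _ = _ := (norm_prod _ _).symm

theorem norm_normalizedOrbit_succ_sub_le (h : IsTemperedPerturbation F m r a b B τ θ) {n : ℕ}
    {z : ℂ} (hz : z ∈ ball 0 (r n)) (k : ℕ) :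
    ‖normalizedOrbit F m n (k + 1) z - normalizedOrbit F m n k z‖ ≤
      B / (b * r n) * ‖z‖ ^ 2 * θ ^ k := by
  have hrn := h.r_pos n
  have hb := h.b_pos
  have hτ := h.tau_nonneg
  have hB := h.B_nonneg
  have hw : orbit F n k z ∈ ball 0 (r (n + k)) := orbit.mapsTo h.mapsTo n k hz
  have hinv : 1 / r (n + k) ≤ τ ^ k / r n := by
    rw [div_le_div_iff₀ (h.r_pos _) hrn, one_mul]
    exact h.le_pow_mul n k
  have hnum : ‖F (n + k) (orbit F n k z) - m (n + k) * orbit F n k z‖ ≤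
      B * (τ ^ k / r n) * (a ^ k * ‖z‖) ^ 2 :=
    calc _ ≤ B / r (n + k) * ‖orbit F n k z‖ ^ 2 := h.norm_sub_mul_le _ _ hw
      _ = B * (1 / r (n + k)) * ‖orbit F n k z‖ ^ 2 := by ring
      _ ≤ B * (τ ^ k / r n) * (a ^ k * ‖z‖) ^ 2 := by
        gcongr
        exact orbit.norm_le h.mapsTo h.a_pos.le (fun _ _ => h.norm_apply_le) n k hz
  rw [normalizedOrbit_succ_sub h.m_ne_zero, norm_div]
  calc _ ≤ B * (τ ^ k / r n) * (a ^ k * ‖z‖) ^ 2 / b ^ (k + 1) := by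
        gcongr
        exact h.pow_le_norm_prod n (k + 1)
    _ = B / (b * r n) * ‖z‖ ^ 2 * (τ * a ^ 2 / b) ^ k := by
        rw [mul_pow (a ^ k), ← pow_mul, mul_comm k, pow_mul, div_pow, mul_pow]
        field_simp
        ring
    _ ≤ B / (b * r n) * ‖z‖ ^ 2 * θ ^ k := by
        gcongr
        exact h.ratio_le

theorem summable_normalizedOrbit_sub (h : IsTemperedPerturbation F m r a b B τ θ) {n : ℕ} {z : ℂ}
    (hz : z ∈ ball 0 (r n)) :
    Summable fun k => normalizedOrbit F m n (k + 1) z - normalizedOrbit F m n k z :=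
  .of_norm_bounded ((summable_geometric_of_lt_one h.theta_nonneg h.theta_lt_one).mul_left _)
    (h.norm_normalizedOrbit_succ_sub_le hz)

theorem tendsto_normalizedOrbit (h : IsTemperedPerturbation F m r a b B τ θ) {n : ℕ} {z : ℂ}
    (hz : z ∈ ball 0 (r n)) :
    Tendsto (fun k => normalizedOrbit F m n k z) atTop (𝓝 (koenigs F m n z)) := by
  have := Summable.tendsto_atTop_add_tsum_sub (f := fun k => normalizedOrbit F m n k z)
    (h.summable_normalizedOrbit_sub hz)
  rwa [normalizedOrbit_zero] at this

theorem norm_koenigs_sub_le (h : IsTemperedPerturbation F m r a b B τ θ) {n : ℕ} {z : ℂ}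
    (hz : z ∈ ball 0 (r n)) : ‖koenigs F m n z - z‖ ≤ B / (b * (1 - θ)) / r n * ‖z‖ ^ 2 := by
  have hθ := sub_pos.2 h.theta_lt_one
  have hb := h.b_pos
  have hrn := h.r_pos n
  rw [koenigs, add_sub_cancel_left]
  refine (tsum_of_norm_bounded ((hasSum_geometric_of_lt_one h.theta_nonneg
    h.theta_lt_one).mul_left _) (h.norm_normalizedOrbit_succ_sub_le hz)).trans_eq ?_
  field_simp

theorem differentiableOn_koenigs (h : IsTemperedPerturbation F m r a b B τ θ) (n : ℕ) :
    DifferentiableOn ℂ (koenigs F m n) (ball 0 (r n)) := by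
  have hd : ∀ k, DifferentiableOn ℂ (normalizedOrbit F m n k) (ball 0 (r n)) := fun k =>
    (orbit.differentiableOn h.mapsTo h.differentiableOn n k).div_const _
  refine differentiableOn_id.add (Complex.differentiableOn_tsum_of_summable_norm
    ((summable_geometric_of_lt_one h.theta_nonneg h.theta_lt_one).mul_left
      (B / (b * r n) * r n ^ 2)) (fun k => (hd (k + 1)).sub (hd k)) isOpen_ball
    fun k z hz => (h.norm_normalizedOrbit_succ_sub_le hz k).trans ?_)
  have := h.B_nonneg
  have := h.b_pos
  have := h.r_pos n
  have := h.theta_nonneg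
  gcongr
  exact (mem_ball_zero_iff.1 hz).le

theorem koenigs_apply (h : IsTemperedPerturbation F m r a b B τ θ) {n : ℕ} {w : ℂ}
    (hw : w ∈ ball 0 (r n)) : koenigs F m (n + 1) (F n w) = m n * koenigs F m n w :=
  tendsto_nhds_unique (h.tendsto_normalizedOrbit (h.mapsTo n hw))
    ((((h.tendsto_normalizedOrbit hw).comp (tendsto_add_atTop_nat 1)).const_mul (m n)).congr
      fun k => (normalizedOrbit_succ_apply h.m_ne_zero n k w).symm)

theorem koenigs_zero (h : IsTemperedPerturbation F m r a b B τ θ) (n : ℕ) :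
    koenigs F m n 0 = 0 := by
  simpa using h.norm_koenigs_sub_le (mem_ball_self (h.r_pos n))

theorem hasDerivAt_koenigs_zero (h : IsTemperedPerturbation F m r a b B τ θ) (n : ℕ) :
    HasDerivAt (koenigs F m n) 1 0 := by
  have hu := hasDerivAt_zero_of_norm_le_mul_sq
    (Filter.mem_of_superset (ball_mem_nhds 0 (h.r_pos n)) fun z hz => h.norm_koenigs_sub_le hz)
  simpa using hu.fun_add (hasDerivAt_id' (x := (0 : ℂ)))

theorem norm_deriv_koenigs_sub_one_le (h : IsTemperedPerturbation F m r a b B τ θ) {n : ℕ}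
    {z : ℂ} (hz : z ∈ closedBall 0 (r n / 6)) : ‖deriv (koenigs F m n) z - 1‖ ≤ 1 / 2 := by
  have hrn := h.r_pos n
  have hzr : z ∈ ball 0 (r n) := closedBall_subset_ball (by linarith) hz
  have hd := h.differentiableOn_koenigs n
  have hderiv : deriv (fun w => koenigs F m n w - w) z = deriv (koenigs F m n) z - 1 := by
    rw [deriv_fun_sub (hd.differentiableAt (isOpen_ball.mem_nhds hzr)) differentiableAt_fun_id,
      deriv_id'']
  rw [← hderiv]
  refine (norm_deriv_le_of_norm_le_mul_sq hrn (hd.sub differentiableOn_id)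
    (fun w hw => h.norm_koenigs_sub_le hw) hz).trans ?_
  have hK : B / (b * (1 - θ)) ≤ 1 :=
    (div_le_one (mul_pos h.b_pos (sub_pos.2 h.theta_lt_one))).2 h.le_mul_one_sub
  rw [div_mul_cancel₀ _ hrn.ne']
  linarith

theorem approximatesLinearOn_koenigs (h : IsTemperedPerturbation F m r a b B τ θ) (n : ℕ) :
    ApproximatesLinearOn (koenigs F m n) (ContinuousLinearEquiv.refl ℂ ℂ : ℂ →L[ℂ] ℂ)
      (closedBall 0 (2 * (r n / 12))) (1 / 2) := by
  have hsub : closedBall (0 : ℂ) (2 * (r n / 12)) ⊆ ball 0 (r n) :=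
    closedBall_subset_ball (by linarith [h.r_pos n])
  refine approximatesLinearOn_refl_of_norm_deriv_sub_one_le (convex_closedBall _ _)
    (fun z hz => (h.differentiableOn_koenigs n).differentiableAt
      (isOpen_ball.mem_nhds (hsub hz))) fun z hz => ?_
  have hz' : z ∈ closedBall (0 : ℂ) (r n / 6) := by rwa [show r n / 6 = 2 * (r n / 12) by ring]
  simpa using h.norm_deriv_koenigs_sub_one_le hz'

theorem surjOn_koenigs (h : IsTemperedPerturbation F m r a b B τ θ) (n : ℕ) :
    SurjOn (koenigs F m n) (closedBall 0 (2 * (r n / 12))) (closedBall 0 (r n / 12)) :=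
  surjOn_closedBall_of_approximatesLinearOn (h.approximatesLinearOn_koenigs n)
    (by linarith [h.r_pos n]) (h.koenigs_zero n)

end IsTemperedPerturbation

-- On `closedBall 0 (2 * (r n / 12))` the derivative of `koenigs F m n` is within `1 / 2` of `1`.
noncomputable def koenigsInv (F : ℕ → ℂ → ℂ) (m : ℕ → ℂ) (r : ℕ → ℝ) (n : ℕ) : ℂ → ℂ :=
  invFunOn (koenigs F m n) (closedBall 0 (2 * (r n / 12)))

namespace IsTemperedPerturbation

variable {F : ℕ → ℂ → ℂ} {m : ℕ → ℂ} {r : ℕ → ℝ} {a b B τ θ : ℝ}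

theorem mapsTo_koenigsInv (h : IsTemperedPerturbation F m r a b B τ θ) (n : ℕ) :
    MapsTo (koenigsInv F m r n) (ball 0 (r n / 12)) (closedBall 0 (2 * (r n / 12))) :=
  (h.surjOn_koenigs n).mapsTo_invFunOn.mono_left ball_subset_closedBall

theorem koenigs_koenigsInv (h : IsTemperedPerturbation F m r a b B τ θ) {n : ℕ} {z : ℂ}
    (hz : z ∈ ball 0 (r n / 12)) : koenigs F m n (koenigsInv F m r n z) = z :=
  (h.surjOn_koenigs n).rightInvOn_invFunOn (ball_subset_closedBall hz)

theorem injOn_koenigsInv (h : IsTemperedPerturbation F m r a b B τ θ) (n : ℕ) :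
    InjOn (koenigsInv F m r n) (ball 0 (r n / 12)) :=
  LeftInvOn.injOn fun _ hz => h.koenigs_koenigsInv hz

theorem koenigsInv_zero (h : IsTemperedPerturbation F m r a b B τ θ) (n : ℕ) :
    koenigsInv F m r n 0 = 0 := by
  have h0 : (0 : ℂ) ∈ ball 0 (r n / 12) := mem_ball_self (by linarith [h.r_pos n])
  refine injOn_of_approximatesLinearOn (h.approximatesLinearOn_koenigs n)
    (h.mapsTo_koenigsInv n h0) (mem_closedBall_self (by linarith [h.r_pos n])) ?_
  rw [h.koenigs_koenigsInv h0, h.koenigs_zero]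

theorem hasDerivAt_koenigsInv (h : IsTemperedPerturbation F m r a b B τ θ) {n : ℕ} {z : ℂ}
    (hz : z ∈ ball 0 (r n / 12)) :
    HasDerivAt (koenigsInv F m r n) (deriv (koenigs F m n) (koenigsInv F m r n z))⁻¹ z := by
  have hmem := h.mapsTo_koenigsInv n hz
  have hd := h.norm_deriv_koenigs_sub_one_le
    (by rwa [show r n / 6 = 2 * (r n / 12) by ring] : koenigsInv F m r n z ∈ closedBall 0 (r n / 6))
  refine hasDerivAt_invFunOn_of_approximatesLinearOn (h.approximatesLinearOn_koenigs n)
    (h.koenigs_zero n) hz ((h.differentiableOn_koenigs n).differentiableAt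
      (isOpen_ball.mem_nhds (closedBall_subset_ball (by linarith [h.r_pos n]) hmem))).hasDerivAt
    fun h0 => ?_
  rw [h0] at hd
  norm_num at hd

theorem differentiableOn_koenigsInv (h : IsTemperedPerturbation F m r a b B τ θ) (n : ℕ) :
    DifferentiableOn ℂ (koenigsInv F m r n) (ball 0 (r n / 12)) := fun _ hz =>
  (h.hasDerivAt_koenigsInv hz).differentiableAt.differentiableWithinAt

theorem deriv_koenigsInv_zero (h : IsTemperedPerturbation F m r a b B τ θ) (n : ℕ) :
    deriv (koenigsInv F m r n) 0 = 1 := by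
  have := (h.hasDerivAt_koenigsInv
    (mem_ball_self (by linarith [h.r_pos n]) : (0 : ℂ) ∈ ball 0 (r n / 12))).deriv
  rwa [h.koenigsInv_zero, (h.hasDerivAt_koenigs_zero n).deriv, inv_one] at this

theorem mul_mem_ball (h : IsTemperedPerturbation F m r a b B τ θ) {n : ℕ} {z : ℂ}
    (hz : z ∈ ball 0 (r n / 12)) : m n * z ∈ ball 0 (r (n + 1) / 12) := by
  rw [mem_ball_zero_iff, norm_mul]
  calc ‖m n‖ * ‖z‖ < ‖m n‖ * (r n / 12) :=
        mul_lt_mul_of_pos_left (mem_ball_zero_iff.1 hz) (norm_pos_iff.2 (h.m_ne_zero n))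
    _ ≤ a * r n / 12 := by nlinarith [h.norm_le n, h.r_pos n]
    _ ≤ r (n + 1) / 12 := by linarith [h.mul_le n]

theorem apply_koenigsInv (h : IsTemperedPerturbation F m r a b B τ θ) {n : ℕ} {z : ℂ}
    (hz : z ∈ ball 0 (r n / 12)) :
    F n (koenigsInv F m r n z) = koenigsInv F m r (n + 1) (m n * z) := by
  have hx := h.mapsTo_koenigsInv n hz
  have hx' : koenigsInv F m r n z ∈ ball 0 (r n) :=
    closedBall_subset_ball (by linarith [h.r_pos n]) hx
  have hmz := h.mul_mem_ball hz
  refine injOn_of_approximatesLinearOn (h.approximatesLinearOn_koenigs (n + 1)) ?_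
    (h.mapsTo_koenigsInv (n + 1) hmz) ?_
  · rw [mem_closedBall_zero_iff] at hx ⊢
    calc ‖F n (koenigsInv F m r n z)‖ ≤ a * ‖koenigsInv F m r n z‖ := h.norm_apply_le hx'
      _ ≤ a * (2 * (r n / 12)) := mul_le_mul_of_nonneg_left hx h.a_pos.le
      _ ≤ 2 * (r (n + 1) / 12) := by linarith [h.mul_le n]
  · rw [h.koenigs_apply hx', h.koenigs_koenigsInv hz, h.koenigs_koenigsInv hmz]

end IsTemperedPerturbation

open Real in
theorem exp_add_mul_exp_sub_one_le {lam ε s : ℝ} (h6 : lam + 6 * ε < 0)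
    (hs : s = ∑' m : ℕ, exp ((m : ℝ) * (lam + 6 * ε)))
    (hcond1 : s * exp (2 * ε) * (exp ε - 1) ≤ 1 / 2) :
    exp (lam + ε) * (exp ε - 1) ≤ exp (lam - ε) * (1 - exp (lam + 6 * ε)) := by
  have hθ : 0 < 1 - exp (lam + 6 * ε) := sub_pos.2 (exp_lt_one_iff.2 h6)
  simp_rw [exp_nat_mul] at hs
  rw [hs, tsum_geometric_of_lt_one (exp_pos _).le (exp_lt_one_iff.2 h6), mul_assoc,
    inv_mul_le_iff₀ hθ] at hcond1
  rw [show lam + ε = lam - ε + 2 * ε by ring, exp_add, mul_assoc]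
  have := exp_pos (lam - ε)
  gcongr
  linarith

open Real in
theorem isTemperedPerturbation_of_chart_bounds {lam ε s : ℝ} {q : ℕ → ℝ} {F : ℕ → ℂ → ℂ}
    {m : ℕ → ℂ} (hε : 0 < ε) (h6 : lam + 6 * ε < 0)
    (hs : s = ∑' m : ℕ, exp ((m : ℝ) * (lam + 6 * ε)))
    (hcond1 : s * exp (2 * ε) * (exp ε - 1) ≤ 1 / 2) (hcond2 : exp lam * (exp ε - 1) ≤ 1)
    (hq0 : ∀ n, 0 < q n)
    (hqtemp : ∀ n, exp (-ε) * q n ≤ q (n + 1) ∧ q (n + 1) ≤ exp ε * q n)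
    (hFhol : ∀ n, DifferentiableOn ℂ (F n) (ball 0 (q n)))
    (hFmaps : ∀ n, MapsTo (F n) (ball 0 (q n)) (ball 0 (q (n + 1))))
    (hF0 : ∀ n, F n 0 = 0) (hm : ∀ n, m n = deriv (F n) 0)
    (hmlow : ∀ n, exp (lam - ε) ≤ ‖m n‖) (hmup : ∀ n, ‖m n‖ ≤ exp (lam + ε)) :
    IsTemperedPerturbation F m (fun n => exp lam * (exp ε - 1) / 2 * q n) (exp (lam + 2 * ε))
      (exp (lam - ε)) (exp (lam + ε) * (exp ε - 1)) (exp ε) (exp (lam + 6 * ε)) := by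
  have hε1 : 1 < exp ε := one_lt_exp_iff.2 hε
  have hρ : 0 < exp lam * (exp ε - 1) / 2 := by have := exp_pos lam; nlinarith
  have hball : ∀ n, ball (0 : ℂ) (exp lam * (exp ε - 1) / 2 * q n) ⊆ ball 0 (q n) := fun n =>
    ball_subset_ball (by nlinarith [hq0 n])
  have hq : ∀ n, q n ≤ exp ε * q (n + 1) := fun n => by
    have := (hqtemp n).1
    rwa [exp_neg, inv_mul_le_iff₀ (exp_pos ε)] at this
  refine ⟨fun n => by positivity [hq0 n], fun n => (hFhol n).mono (hball n), fun n w hw => ?_,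
    by nlinarith [exp_pos (lam + ε)], exp_pos _, hmlow, fun n => ?_, fun n => ?_,
    fun n => by nlinarith [hq n], ?_, exp_lt_one_iff.2 h6, exp_add_mul_exp_sub_one_le h6 hs hcond1⟩
  · have hmaps : MapsTo (F n) (ball 0 (q n)) (closedBall 0 (exp ε * q n)) := fun z hz =>
      closedBall_subset_closedBall (hqtemp n).2 (ball_subset_closedBall (hFmaps n hz))
    rw [hm]
    refine (norm_sub_deriv_mul_le_of_mapsTo_ball (hFhol n) hmaps (hF0 n) (hball n hw)).trans_eq ?_
    rw [exp_add]
    field_simp [(sub_pos.2 hε1).ne']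
  · rw [show lam + 2 * ε = lam + ε + ε by ring, exp_add (lam + ε)]
    linarith [hmup n]
  · have h3 : exp (lam + 2 * ε) * exp ε ≤ 1 := by
      rw [← exp_add]; exact exp_le_one_iff.2 (by linarith)
    calc exp (lam + 2 * ε) * (exp lam * (exp ε - 1) / 2 * q n)
        ≤ exp (lam + 2 * ε) * (exp lam * (exp ε - 1) / 2 * (exp ε * q (n + 1))) := by
          gcongr; exact hq n
      _ = exp (lam + 2 * ε) * exp ε * (exp lam * (exp ε - 1) / 2 * q (n + 1)) := by ring
      _ ≤ exp lam * (exp ε - 1) / 2 * q (n + 1) :=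
          mul_le_of_le_one_left (by positivity [hq0 (n + 1)]) h3
  · rw [sq, ← exp_add, ← exp_add, ← exp_sub]
    exact exp_le_exp.2 (by linarith)

theorem linearization_along_stable_manifolds_general
    (lam ε : ℝ) (hε : 0 < ε) (h6 : lam + 6 * ε < 0)
    (s : ℝ) (hs : s = ∑' m : ℕ, Real.exp ((m : ℝ) * (lam + 6 * ε)))
    (hcond1 : s * Real.exp (2 * ε) * (Real.exp ε - 1) ≤ 1 / 2)
    (hcond2 : Real.exp lam * (Real.exp ε - 1) ≤ 1)
    (c : ℝ) (hc : c = Real.exp lam * (Real.exp ε - 1) / 24)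
    (q : ℕ → ℝ) (hq0 : ∀ n, 0 < q n)
    (hqtemp : ∀ n, Real.exp (-ε) * q n ≤ q (n + 1) ∧ q (n + 1) ≤ Real.exp ε * q n)
    (F : ℕ → ℂ → ℂ)
    (hFhol : ∀ n, DifferentiableOn ℂ (F n) (Metric.ball 0 (q n)))
    (hFmaps : ∀ n, Set.MapsTo (F n) (Metric.ball 0 (q n)) (Metric.ball 0 (q (n + 1))))
    (hF0 : ∀ n, F n 0 = 0)
    (m : ℕ → ℂ) (hm : ∀ n, m n = deriv (F n) 0)
    (hmlow : ∀ n, Real.exp (lam - ε) ≤ ‖m n‖)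
    (hmup : ∀ n, ‖m n‖ ≤ Real.exp (lam + ε)) :
    ∃ η : ℕ → ℂ → ℂ,
      (∀ n, Set.InjOn (η n) (Metric.ball 0 (c * q n))) ∧
      (∀ n, DifferentiableOn ℂ (η n) (Metric.ball 0 (c * q n))) ∧
      (∀ n, Set.MapsTo (η n) (Metric.ball 0 (c * q n)) (Metric.ball 0 (q n))) ∧
      (∀ n, η n 0 = 0) ∧
      (∀ n, deriv (η n) 0 = 1) ∧
      (∀ n, ∀ z ∈ Metric.ball (0 : ℂ) (c * q n),
        m n * z ∈ Metric.ball (0 : ℂ) (c * q (n + 1)) ∧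
        F n (η n z) = η (n + 1) (m n * z)) := by
  have h := isTemperedPerturbation_of_chart_bounds hε h6 hs hcond1 hcond2 hq0 hqtemp hFhol
    hFmaps hF0 hm hmlow hmup
  set r : ℕ → ℝ := fun n => Real.exp lam * (Real.exp ε - 1) / 2 * q n
  have hcq : ∀ n, c * q n = r n / 12 := fun n => by rw [hc]; ring
  have hsmall : ∀ n, 2 * (r n / 12) < q n := fun n => by
    have := hq0 n
    simp only [r]
    nlinarith
  simp only [hcq]
  exact ⟨koenigsInv F m r, h.injOn_koenigsInv, h.differentiableOn_koenigsInv,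
    fun n => (h.mapsTo_koenigsInv n).mono_right (closedBall_subset_ball (hsmall n)),
    h.koenigsInv_zero, h.deriv_koenigsInv_zero,
    fun n z hz => ⟨h.mul_mem_ball hz, h.apply_koenigsInv hz⟩⟩

/-- **Linearization along local stable manifolds** (coordinate form).
Given an ε-tempered sequence of radii `q n` and holomorphic maps
`F n : D(q n) → D(q (n+1))` fixing `0` with derivatives `m n` of modulus
comparable to `e^λ`, there exist injective holomorphic maps
`η n : D(c·q n) → D(q n)` tangent to the identity at `0` that conjugate the
maps `F n` to the linear maps `z ↦ m n · z`. -/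
theorem linearization_along_stable_manifolds
    (lam ε : ℝ) (hlam : lam < 0) (hε : 0 < ε) (h6 : lam + 6 * ε < 0)
    (s : ℝ) (hs : s = ∑' m : ℕ, Real.exp ((m : ℝ) * (lam + 6 * ε)))
    (hcond1 : s * Real.exp (2 * ε) * (Real.exp ε - 1) ≤ 1 / 2)
    (hcond2 : Real.exp lam * (Real.exp ε - 1) ≤ 1)
    (c : ℝ) (hc : c = Real.exp lam * (Real.exp ε - 1) / 24)
    (q : ℕ → ℝ) (hq0 : ∀ n, 0 < q n) (hq1 : ∀ n, q n ≤ 1)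
    (hqtemp : ∀ n, Real.exp (-ε) * q n ≤ q (n + 1) ∧ q (n + 1) ≤ Real.exp ε * q n)
    (F : ℕ → ℂ → ℂ)
    (hFhol : ∀ n, DifferentiableOn ℂ (F n) (Metric.ball 0 (q n)))
    (hFmaps : ∀ n, Set.MapsTo (F n) (Metric.ball 0 (q n)) (Metric.ball 0 (q (n + 1))))
    (hF0 : ∀ n, F n 0 = 0)
    (m : ℕ → ℂ) (hm : ∀ n, m n = deriv (F n) 0)
    (hmlow : ∀ n, Real.exp (lam - ε) ≤ ‖m n‖)
    (hmup : ∀ n, ‖m n‖ ≤ Real.exp (lam + ε)) :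
    ∃ η : ℕ → ℂ → ℂ,
      (∀ n, Set.InjOn (η n) (Metric.ball 0 (c * q n))) ∧
      (∀ n, DifferentiableOn ℂ (η n) (Metric.ball 0 (c * q n))) ∧
      (∀ n, Set.MapsTo (η n) (Metric.ball 0 (c * q n)) (Metric.ball 0 (q n))) ∧
      (∀ n, η n 0 = 0) ∧
      (∀ n, deriv (η n) 0 = 1) ∧
      (∀ n, ∀ z ∈ Metric.ball (0 : ℂ) (c * q n),
        m n * z ∈ Metric.ball (0 : ℂ) (c * q (n + 1)) ∧
        F n (η n z) = η (n + 1) (m n * z)) :=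
  linearization_along_stable_manifolds_general lam ε hε h6 s hs hcond1 hcond2 c hc q hq0 hqtemp F
    hFhol hFmaps hF0 m hm hmlow hmup
end

section
/- Let λ < 0 and ε > 0 satisfy λ + 3ε ≤ 0 and e^{λ}·(e^ε − 1) ≤ 1. Let q, q' > 0 with e^{−ε}·q ≤ q' ≤ e^{ε}·q, and let F : D(q) → ℂ be holomorphic with F(z) ∈ D(q') for all z ∈ D(q), F(0) = 0 and |F'(0)| ≤ e^{λ+ε}. Set q'' := (e^{λ}(e^ε − 1)/2)·q and q''' := (e^{λ}(e^ε − 1)/2)·q'. Then for every z ∈ D(q''), |F(z)| ≤ e^{λ+2ε}·|z|; in particular F(D(q'')) ⊆ D(e^{λ+2ε}·q'') ⊆ D(q'''). -/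
/-!
Since `F 0 = 0`, the Schwarz lemma applied to `dslope F 0`, which is bounded by `q' / q` on
`D(q)`, gives the second-order estimate `|F z - F'(0) z| ≤ 2 q' |z|² / q²`. Hence
`|F z| ≤ (e^{λ+ε} + 2 q' |z| / q²) |z|`, and on `D(q'')`, using `q' ≤ e^ε q`, the correction
term is at most `e^{λ+ε} (e^ε - 1)`, so the factor is at most `e^{λ+2ε}`. Finally
`λ + 3ε ≤ 0` and `e^{-ε} q ≤ q'` give `e^{λ+2ε} q ≤ q'`, i.e. `e^{λ+2ε} q'' ≤ q'''`.
-/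

open Metric Set

namespace Complex

variable {E : Type*} [NormedAddCommGroup E] [NormedSpace ℂ E] [CompleteSpace E] {f : ℂ → E} {c z : ℂ} {R₁ R₂ : ℝ}

theorem norm_sub_sub_smul_deriv_le_of_mapsTo_ball (hd : DifferentiableOn ℂ f (ball c R₁))
    (h_maps : MapsTo f (ball c R₁) (closedBall (f c) R₂)) (hz : z ∈ ball c R₁) :
    ‖f z - f c - (z - c) • deriv f c‖ ≤ 2 * R₂ / R₁ ^ 2 * ‖z - c‖ ^ 2 := by
  set g := dslope f c
  have hg_diff : DifferentiableOn ℂ g (ball c R₁) :=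
    (differentiableOn_dslope (ball_mem_nhds c (pos_of_mem_ball hz))).2 hd
  have hg_maps : MapsTo g (ball c R₁) (closedBall (g c) (2 * R₂ / R₁)) := fun w hw ↦ by
    rw [mem_closedBall, dist_eq_norm]
    calc ‖g w - g c‖ ≤ ‖g w‖ + ‖g c‖ := norm_sub_le _ _
      _ ≤ R₂ / R₁ + R₂ / R₁ :=
        add_le_add (norm_dslope_le_div_of_mapsTo_ball hd h_maps hw)
          (norm_dslope_le_div_of_mapsTo_ball hd h_maps (mem_ball_self (pos_of_mem_ball hz)))
      _ = 2 * R₂ / R₁ := by ring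
  have hg_schwarz := dist_le_div_mul_dist_of_mapsTo_ball hg_diff hg_maps hz
  rw [dist_eq_norm, dist_eq_norm] at hg_schwarz
  calc ‖f z - f c - (z - c) • deriv f c‖ = ‖z - c‖ * ‖g z - g c‖ := by
        rw [← sub_smul_dslope, ← dslope_same, ← smul_sub, norm_smul]
    _ ≤ ‖z - c‖ * (2 * R₂ / R₁ / R₁ * ‖z - c‖) := by gcongr
    _ = 2 * R₂ / R₁ ^ 2 * ‖z - c‖ ^ 2 := by ring

theorem norm_le_of_mapsTo_ball_of_map_zero (hd : DifferentiableOn ℂ f (ball 0 R₁))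
    (h_maps : MapsTo f (ball 0 R₁) (closedBall 0 R₂)) (hf₀ : f 0 = 0) (hz : z ∈ ball 0 R₁) :
    ‖f z‖ ≤ (‖deriv f 0‖ + 2 * R₂ / R₁ ^ 2 * ‖z‖) * ‖z‖ := by
  have h := norm_sub_sub_smul_deriv_le_of_mapsTo_ball hd (hf₀ ▸ h_maps) hz
  simp only [hf₀, sub_zero] at h
  calc ‖f z‖ ≤ ‖z • deriv f 0‖ + ‖f z - z • deriv f 0‖ := norm_le_insert' _ _
    _ ≤ ‖z‖ * ‖deriv f 0‖ + 2 * R₂ / R₁ ^ 2 * ‖z‖ ^ 2 := by rw [norm_smul]; gcongr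
    _ = (‖deriv f 0‖ + 2 * R₂ / R₁ ^ 2 * ‖z‖) * ‖z‖ := by ring

end Complex

theorem contraction_estimate_general
    (lam ε : ℝ) (hε : 0 < ε)
    (h3 : lam + 3 * ε ≤ 0) (hcond : Real.exp lam * (Real.exp ε - 1) ≤ 1)
    (q q' : ℝ) (hq : 0 < q)
    (hq1 : Real.exp (-ε) * q ≤ q') (hq2 : q' ≤ Real.exp ε * q)
    (F : ℂ → ℂ) (hFhol : DifferentiableOn ℂ F (Metric.ball 0 q))
    (hFmaps : ∀ z ∈ Metric.ball (0 : ℂ) q, F z ∈ Metric.ball (0 : ℂ) q')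
    (hF0 : F 0 = 0)
    (hmup : ‖deriv F 0‖ ≤ Real.exp (lam + ε))
    (q'' q''' : ℝ)
    (hq'' : q'' = Real.exp lam * (Real.exp ε - 1) / 2 * q)
    (hq''' : q''' = Real.exp lam * (Real.exp ε - 1) / 2 * q') :
    (∀ z ∈ Metric.ball (0 : ℂ) q'',
        ‖F z‖ ≤ Real.exp (lam + 2 * ε) * ‖z‖) ∧
    Set.MapsTo F (Metric.ball 0 q'') (Metric.ball 0 (Real.exp (lam + 2 * ε) * q'')) ∧
    Metric.ball (0 : ℂ) (Real.exp (lam + 2 * ε) * q'') ⊆ Metric.ball (0 : ℂ) q''' := by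
  have hc : 0 ≤ Real.exp lam * (Real.exp ε - 1) :=
    mul_nonneg (Real.exp_pos lam).le (by linarith [Real.add_one_le_exp ε])
  have hq''_le : q'' ≤ q := by rw [hq'']; nlinarith
  have hF_maps : MapsTo F (ball 0 q) (closedBall 0 q') := fun z hz ↦
    ball_subset_closedBall (hFmaps z hz)
  have hbound : ∀ z ∈ ball (0 : ℂ) q'', ‖F z‖ ≤ Real.exp (lam + 2 * ε) * ‖z‖ := by
    intro z hz
    have hz' : ‖z‖ < q'' := mem_ball_zero_iff.1 hz
    have hcorrection : 2 * q' / q ^ 2 * ‖z‖ ≤ Real.exp (lam + ε) * (Real.exp ε - 1) := by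
      rw [div_mul_eq_mul_div, div_le_iff₀ (by positivity)]
      calc 2 * q' * ‖z‖ ≤ 2 * (Real.exp ε * q) * q'' := by gcongr
        _ = Real.exp (lam + ε) * (Real.exp ε - 1) * q ^ 2 := by rw [hq'', Real.exp_add]; ring
    calc ‖F z‖ ≤ (‖deriv F 0‖ + 2 * q' / q ^ 2 * ‖z‖) * ‖z‖ :=
          Complex.norm_le_of_mapsTo_ball_of_map_zero hFhol hF_maps hF0 (ball_subset_ball hq''_le hz)
      _ ≤ (Real.exp (lam + ε) + Real.exp (lam + ε) * (Real.exp ε - 1)) * ‖z‖ := by gcongr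
      _ = Real.exp (lam + 2 * ε) * ‖z‖ := by
        rw [show lam + 2 * ε = lam + ε + ε by ring, Real.exp_add (lam + ε)]; ring
  have hrate : Real.exp (lam + 2 * ε) * q ≤ q' :=
    (mul_le_mul_of_nonneg_right (Real.exp_le_exp.2 (by linarith)) hq.le).trans hq1
  refine ⟨hbound, fun z hz ↦ ?_, ball_subset_ball ?_⟩
  · rw [mem_ball_zero_iff]
    exact (hbound z hz).trans_lt (by gcongr; exact mem_ball_zero_iff.1 hz)
  · calc Real.exp (lam + 2 * ε) * q''
          = Real.exp lam * (Real.exp ε - 1) / 2 * (Real.exp (lam + 2 * ε) * q) := by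
            rw [hq'']; ring
      _ ≤ q''' := by rw [hq''']; gcongr

/-- **Contraction estimate and disk invariance.** Under the hypotheses of the
linearization proposition, on the rescaled disk `D(q'')` one has
`|F z| ≤ e^{λ+2ε} |z|`; in particular `F(D(q'')) ⊆ D(e^{λ+2ε} q'') ⊆ D(q''')`. -/
theorem contraction_estimate
    (lam ε : ℝ) (hlam : lam < 0) (hε : 0 < ε)
    (h3 : lam + 3 * ε ≤ 0) (hcond : Real.exp lam * (Real.exp ε - 1) ≤ 1)
    (q q' : ℝ) (hq : 0 < q) (hq' : 0 < q')
    (hq1 : Real.exp (-ε) * q ≤ q') (hq2 : q' ≤ Real.exp ε * q)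
    (F : ℂ → ℂ) (hFhol : DifferentiableOn ℂ F (Metric.ball 0 q))
    (hFmaps : ∀ z ∈ Metric.ball (0 : ℂ) q, F z ∈ Metric.ball (0 : ℂ) q')
    (hF0 : F 0 = 0)
    (hmup : ‖deriv F 0‖ ≤ Real.exp (lam + ε))
    (q'' q''' : ℝ)
    (hq'' : q'' = Real.exp lam * (Real.exp ε - 1) / 2 * q)
    (hq''' : q''' = Real.exp lam * (Real.exp ε - 1) / 2 * q') :
    (∀ z ∈ Metric.ball (0 : ℂ) q'',
        ‖F z‖ ≤ Real.exp (lam + 2 * ε) * ‖z‖) ∧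
    Set.MapsTo F (Metric.ball 0 q'') (Metric.ball 0 (Real.exp (lam + 2 * ε) * q'')) ∧
    Metric.ball (0 : ℂ) (Real.exp (lam + 2 * ε) * q'') ⊆ Metric.ball (0 : ℂ) q''' :=
  contraction_estimate_general lam ε hε h3 hcond q q' hq hq1 hq2 F hFhol hFmaps hF0 hmup q'' q'''
    hq'' hq'''
end

section
/- Let λ < 0 and ε > 0 with λ + 6ε < 0 and e^{λ}·(e^ε − 1) ≤ 1. Let (q_n)_{n≥0} be positive reals with e^{−ε}·q_n ≤ q_{n+1} ≤ e^{ε}·q_n, and for each n let F_n : D(q_n) → D(q_{n+1}) be holomorphic with F_n(0) = 0 and m_n := F_n'(0) satisfying e^{λ−ε} ≤ |m_n| ≤ e^{λ+ε}. Set q'_n := (e^{λ}(e^ε − 1)/2)·q_n and Q_n := 2·e^{−λ+2ε}/q_n. For m ≥ 0 define η̃_{m,n} on D(q'_n) by η̃_{0,n}(z) := z and η̃_{m,n}(z) := (F_{n+m−1} ∘ ⋯ ∘ F_n)(z) / (m_n·m_{n+1}·⋯·m_{n+m−1}); these maps are well defined because F_k(D(q'_k)) ⊆ D(q'_{k+1})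 for all k. Then for all n ≥ 0, m ≥ 0 and z ∈ D(q'_n): |η̃_{m+1,n}(z) − η̃_{m,n}(z)| ≤ e^{m(λ+6ε)}·|z|²·Q_n. -/
/-!
By the Schwarz lemma applied to the difference quotient of `F_n`, `F_n z = m_n z + O(|z|² / q_n)`
on `D(q_n)`. On the smaller disk `D(q'_n)` the error is at most `e^{λ+ε}(e^ε - 1)|z|`, so
`|F_n z| ≤ e^{λ+2ε}|z|` and `F_n` maps `D(q'_n)` into `D(q'_{n+1})`. Since
`η̃_{k+1,n} - η̃_{k,n} = (η̃_{k,n+1} - η̃_{k-1,n+1}) ∘ F_n / m_n`, each step of the induction on `k`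
costs a factor `e^{2(λ+2ε)}` from `|F_n z|²`, `e^ε` from `Q_{n+1} ≤ e^ε Q_n` and `e^{-λ+ε}` from
`1 / |m_n|`, that is, `e^{λ+6ε}`.
-/

/-- The composition `F_{n+m-1} ∘ ⋯ ∘ F_n` (equal to the identity when `m = 0`). -/
noncomputable def compChain (F : ℕ → ℂ → ℂ) : ℕ → ℕ → ℂ → ℂ
  | 0, _, z => z
  | m + 1, n, z => compChain F m (n + 1) (F n z)

/-- The renormalized compositions
`η̃_{m,n}(z) = (F_{n+m-1} ∘ ⋯ ∘ F_n)(z) / (m_n ⋯ m_{n+m-1})`. -/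
noncomputable def etaTilde (F : ℕ → ℂ → ℂ) (m : ℕ → ℂ) (k n : ℕ) (z : ℂ) : ℂ :=
  compChain F k n z / ∏ i ∈ Finset.range k, m (n + i)

open Metric Set Real

section Schwarz

variable {E : Type*} [NormedAddCommGroup E] [NormedSpace ℂ E] [CompleteSpace E] {f : ℂ → E}
  {c z : ℂ} {R₁ R₂ : ℝ}

theorem norm_sub_sub_smul_deriv_le_of_mapsTo_ball (hd : DifferentiableOn ℂ f (ball c R₁))
    (h_maps : MapsTo f (ball c R₁) (closedBall (f c) R₂)) (hz : z ∈ ball c R₁) :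
    ‖f z - f c - (z - c) • deriv f c‖ ≤ (R₂ / R₁ + ‖deriv f c‖) / R₁ * ‖z - c‖ ^ 2 := by
  have hg : DifferentiableOn ℂ (dslope f c) (ball c R₁) :=
    (Complex.differentiableOn_dslope (ball_mem_nhds c (nonempty_ball.mp ⟨z, hz⟩))).2 hd
  have hg_maps : MapsTo (dslope f c) (ball c R₁)
      (closedBall (dslope f c c) (R₂ / R₁ + ‖deriv f c‖)) := fun w hw => by
    rw [mem_closedBall, dist_eq_norm, dslope_same]
    grw [norm_sub_le, Complex.norm_dslope_le_div_of_mapsTo_ball hd h_maps hw]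
  have hexpand :
      f z - f c - (z - c) • deriv f c = (z - c) • (z - c) • dslope (dslope f c) c z := by
    rw [sub_smul_dslope, smul_sub, sub_smul_dslope, dslope_same]
  rw [hexpand, norm_smul, norm_smul, ← mul_assoc, ← sq, mul_comm]
  gcongr
  exact Complex.norm_dslope_le_div_of_mapsTo_ball hg hg_maps hz

end Schwarz

theorem norm_sub_deriv_mul_le_of_mapsTo_ball_zero {G : ℂ → ℂ} {r R a : ℝ} {z : ℂ}
    (hG : DifferentiableOn ℂ G (ball 0 r)) (hmaps : MapsTo G (ball 0 r) (ball 0 R))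
    (hG0 : G 0 = 0) (hR : R ≤ a * r) (ha : ‖deriv G 0‖ ≤ a) (hz : z ∈ ball 0 r) :
    ‖G z - deriv G 0 * z‖ ≤ 2 * a / r * ‖z‖ ^ 2 := by
  have hr : 0 < r := nonempty_ball.mp ⟨z, hz⟩
  have h := norm_sub_sub_smul_deriv_le_of_mapsTo_ball hG
    (by simpa [hG0] using hmaps.mono_right ball_subset_closedBall) hz
  simp only [hG0, sub_zero, smul_eq_mul] at h
  refine (mul_comm z _ ▸ h).trans ?_
  gcongr
  linarith [(div_le_iff₀ hr).2 hR]

theorem norm_le_exp_mul_of_norm_sub_mul_le {w d z : ℂ} {lam ε r : ℝ} (hr : 0 < r)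
    (hquad : ‖w - d * z‖ ≤ 2 * exp ε / r * ‖z‖ ^ 2) (hd : ‖d‖ ≤ exp (lam + ε))
    (hz : ‖z‖ ≤ exp lam * (exp ε - 1) / 2 * r) :
    ‖w‖ ≤ exp (lam + 2 * ε) * ‖z‖ := by
  calc ‖w‖ ≤ ‖d * z‖ + ‖w - d * z‖ := norm_le_insert' _ _
    _ ≤ exp (lam + ε) * ‖z‖ + 2 * exp ε / r * ‖z‖ ^ 2 := by
      rw [norm_mul]
      gcongr
    _ ≤ exp (lam + ε) * ‖z‖ + 2 * exp ε / r * (exp lam * (exp ε - 1) / 2 * r) * ‖z‖ := by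
      rw [sq, ← mul_assoc]
      gcongr
    _ = exp (lam + 2 * ε) * ‖z‖ := by
      rw [show lam + 2 * ε = lam + ε + ε by ring]
      simp only [exp_add]
      field_simp
      ring

theorem exp_mul_exp_sub_one_div_two_mem_Icc {lam ε : ℝ} (hε : 0 ≤ ε) (h : lam + ε ≤ 0) :
    exp lam * (exp ε - 1) / 2 ∈ Icc 0 1 := by
  have hε1 : 1 ≤ exp ε := one_le_exp hε
  have hprod : exp lam * exp ε ≤ 1 := by rw [← exp_add]; exact exp_le_one_iff.2 h
  constructor
  · have := exp_pos lam
    nlinarith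
  · nlinarith [exp_pos lam]

theorem mapsTo_ball_zero_of_norm_le_mul {G : ℂ → ℂ} {L s s' : ℝ} (hL : 0 < L)
    (hG : ∀ z ∈ ball 0 s, ‖G z‖ ≤ L * ‖z‖) (hs : L * s ≤ s') :
    MapsTo G (ball 0 s) (ball 0 s') := fun z hz => by
  rw [mem_ball_zero_iff] at hz ⊢
  exact ((hG z (mem_ball_zero_iff.2 hz)).trans_lt (mul_lt_mul_of_pos_left hz hL)).trans_le hs

theorem div_le_exp_mul_div_of_exp_neg_mul_le {a b C ε : ℝ} (hC : 0 ≤ C) (ha : 0 < a)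
    (h : exp (-ε) * a ≤ b) : C / b ≤ exp ε * (C / a) := by
  calc C / b ≤ C / (exp (-ε) * a) := div_le_div_of_nonneg_left hC (by positivity) h
    _ = exp ε * (C / a) := by rw [exp_neg]; field_simp

theorem etaTilde_zero (F : ℕ → ℂ → ℂ) (m : ℕ → ℂ) (n : ℕ) (z : ℂ) : etaTilde F m 0 n z = z := by
  simp [etaTilde, compChain]

theorem etaTilde_succ (F : ℕ → ℂ → ℂ) (m : ℕ → ℂ) (k n : ℕ) (z : ℂ) :
    etaTilde F m (k + 1) n z = etaTilde F m k (n + 1) (F n z) / m n := by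
  simp only [etaTilde, compChain, Finset.prod_range_succ', add_zero, div_div]
  simp only [add_assoc, add_comm 1]

theorem norm_etaTilde_succ_sub_le {F : ℕ → ℂ → ℂ} {m : ℕ → ℂ} {U : ℕ → Set ℂ} {L μ θ ρ : ℝ}
    {Q : ℕ → ℝ} (hmaps : ∀ n, MapsTo (F n) (U n) (U (n + 1)))
    (hlin : ∀ n, ∀ z ∈ U n, ‖F n z‖ ≤ L * ‖z‖)
    (hμ : 0 < μ) (hm : ∀ n, μ ≤ ‖m n‖)
    (hquad : ∀ n, ∀ z ∈ U n, ‖F n z - m n * z‖ ≤ μ * Q n * ‖z‖ ^ 2)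
    (hQ : ∀ n, 0 ≤ Q n) (hQ_succ : ∀ n, Q (n + 1) ≤ θ * Q n) (hρ : 0 ≤ ρ)
    (hLθ : L ^ 2 * θ ≤ ρ * μ) :
    ∀ k n, ∀ z ∈ U n,
      ‖etaTilde F m (k + 1) n z - etaTilde F m k n z‖ ≤ ρ ^ k * ‖z‖ ^ 2 * Q n := by
  intro k
  induction k with
  | zero =>
    intro n z hz
    have hmn : 0 < ‖m n‖ := hμ.trans_le (hm n)
    have hQn := hQ n
    rw [etaTilde_succ, etaTilde_zero, etaTilde_zero, div_sub' (norm_pos_iff.1 hmn), norm_div,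
      div_le_iff₀ hmn]
    calc ‖F n z - m n * z‖ ≤ μ * Q n * ‖z‖ ^ 2 := hquad n z hz
      _ ≤ ‖m n‖ * Q n * ‖z‖ ^ 2 := by gcongr; exact hm n
      _ = ρ ^ 0 * ‖z‖ ^ 2 * Q n * ‖m n‖ := by ring
  | succ k ih =>
    intro n z hz
    have hQn := hQ n
    have hρk := pow_nonneg hρ k
    rw [etaTilde_succ F m (k + 1) n z, etaTilde_succ F m k n z, ← sub_div, norm_div,
      div_le_iff₀ (hμ.trans_le (hm n))]
    have hFz : ‖F n z‖ ^ 2 ≤ L ^ 2 * ‖z‖ ^ 2 := by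
      rw [← mul_pow]; exact pow_le_pow_left₀ (norm_nonneg _) (hlin n z hz) 2
    have hLQ : L ^ 2 * Q (n + 1) ≤ ρ * μ * Q n :=
      calc L ^ 2 * Q (n + 1) ≤ L ^ 2 * (θ * Q n) := by gcongr; exact hQ_succ n
        _ ≤ ρ * μ * Q n := by rw [← mul_assoc]; gcongr
    calc _ ≤ ρ ^ k * ‖F n z‖ ^ 2 * Q (n + 1) := ih (n + 1) (F n z) (hmaps n hz)
      _ ≤ ρ ^ k * (L ^ 2 * ‖z‖ ^ 2) * Q (n + 1) := by gcongr; exact hQ _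
      _ = ρ ^ k * ‖z‖ ^ 2 * (L ^ 2 * Q (n + 1)) := by ring
      _ ≤ ρ ^ k * ‖z‖ ^ 2 * (ρ * μ * Q n) := by gcongr
      _ ≤ ρ ^ k * ‖z‖ ^ 2 * (ρ * ‖m n‖ * Q n) := by gcongr; exact hm n
      _ = ρ ^ (k + 1) * ‖z‖ ^ 2 * Q n * ‖m n‖ := by ring

theorem etaTilde_telescoping_estimate_general
    (lam ε : ℝ) (hε : 0 < ε) (h6 : lam + 6 * ε < 0)
    (q : ℕ → ℝ) (hq0 : ∀ n, 0 < q n)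
    (hqtemp : ∀ n, Real.exp (-ε) * q n ≤ q (n + 1) ∧ q (n + 1) ≤ Real.exp ε * q n)
    (F : ℕ → ℂ → ℂ)
    (hFhol : ∀ n, DifferentiableOn ℂ (F n) (Metric.ball 0 (q n)))
    (hFmaps : ∀ n, Set.MapsTo (F n) (Metric.ball 0 (q n)) (Metric.ball 0 (q (n + 1))))
    (hF0 : ∀ n, F n 0 = 0)
    (m : ℕ → ℂ) (hm : ∀ n, m n = deriv (F n) 0)
    (hmlow : ∀ n, Real.exp (lam - ε) ≤ ‖m n‖)
    (hmup : ∀ n, ‖m n‖ ≤ Real.exp (lam + ε))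
    (q' : ℕ → ℝ) (hq' : ∀ n, q' n = Real.exp lam * (Real.exp ε - 1) / 2 * q n)
    (Q : ℕ → ℝ) (hQ : ∀ n, Q n = 2 * Real.exp (-lam + 2 * ε) / q n) :
    ∀ n k : ℕ, ∀ z ∈ Metric.ball (0 : ℂ) (q' n),
      ‖etaTilde F m (k + 1) n z - etaTilde F m k n z‖ ≤
        Real.exp ((k : ℝ) * (lam + 6 * ε)) * ‖z‖ ^ 2 * Q n := by
  obtain ⟨hc, hc1⟩ := exp_mul_exp_sub_one_div_two_mem_Icc (lam := lam) hε.le (by linarith)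
  have hsub : ∀ n, ball (0 : ℂ) (q' n) ⊆ ball 0 (q n) := fun n =>
    ball_subset_ball (hq' n ▸ mul_le_of_le_one_left (hq0 n).le hc1)
  have hquad : ∀ n, ∀ z ∈ ball 0 (q n), ‖F n z - m n * z‖ ≤ 2 * exp ε / q n * ‖z‖ ^ 2 :=
    fun n z hz => hm n ▸ norm_sub_deriv_mul_le_of_mapsTo_ball_zero (hFhol n) (hFmaps n) (hF0 n)
      (hqtemp n).2 (hm n ▸ (hmup n).trans (exp_le_exp.2 (by linarith))) hz
  have hlin : ∀ n, ∀ z ∈ ball 0 (q' n), ‖F n z‖ ≤ exp (lam + 2 * ε) * ‖z‖ := fun n z hz =>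
    norm_le_exp_mul_of_norm_sub_mul_le (hq0 n) (hquad n z (hsub n hz)) (hmup n)
      (hq' n ▸ (mem_ball_zero_iff.1 hz).le)
  have hmaps : ∀ n, MapsTo (F n) (ball 0 (q' n)) (ball 0 (q' (n + 1))) := fun n => by
    refine mapsTo_ball_zero_of_norm_le_mul (exp_pos _) (hlin n) ?_
    rw [hq', hq', mul_left_comm]
    gcongr
    exact (mul_le_mul_of_nonneg_right (exp_le_exp.2 (by linarith)) (hq0 n).le).trans (hqtemp n).1
  intro n k z hz
  rw [exp_nat_mul]
  refine norm_etaTilde_succ_sub_le (θ := exp ε) hmaps hlin (exp_pos _) hmlow (fun n z hz => ?_)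
    (fun n => ?_) (fun n => ?_) (exp_pos _).le ?_ k n z hz
  · refine (hquad n z (hsub n hz)).trans_eq ?_
    rw [hQ, mul_div_assoc', mul_left_comm, ← exp_add]
    ring_nf
  · rw [hQ]; have := hq0 n; positivity
  · rw [hQ, hQ]
    exact div_le_exp_mul_div_of_exp_neg_mul_le (by positivity) (hq0 n) (hqtemp n).1
  · simp only [sq, ← exp_add]
    exact exp_le_exp.2 (by linarith)

/-- **Telescoping estimate.** For all `n`, `k` and `z ∈ D(q'_n)`,
`|η̃_{k+1,n}(z) − η̃_{k,n}(z)| ≤ e^{k(λ+6ε)} |z|² Q_n`. -/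
theorem etaTilde_telescoping_estimate
    (lam ε : ℝ) (hlam : lam < 0) (hε : 0 < ε) (h6 : lam + 6 * ε < 0)
    (hcond : Real.exp lam * (Real.exp ε - 1) ≤ 1)
    (q : ℕ → ℝ) (hq0 : ∀ n, 0 < q n)
    (hqtemp : ∀ n, Real.exp (-ε) * q n ≤ q (n + 1) ∧ q (n + 1) ≤ Real.exp ε * q n)
    (F : ℕ → ℂ → ℂ)
    (hFhol : ∀ n, DifferentiableOn ℂ (F n) (Metric.ball 0 (q n)))
    (hFmaps : ∀ n, Set.MapsTo (F n) (Metric.ball 0 (q n)) (Metric.ball 0 (q (n + 1))))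
    (hF0 : ∀ n, F n 0 = 0)
    (m : ℕ → ℂ) (hm : ∀ n, m n = deriv (F n) 0)
    (hmlow : ∀ n, Real.exp (lam - ε) ≤ ‖m n‖)
    (hmup : ∀ n, ‖m n‖ ≤ Real.exp (lam + ε))
    (q' : ℕ → ℝ) (hq' : ∀ n, q' n = Real.exp lam * (Real.exp ε - 1) / 2 * q n)
    (Q : ℕ → ℝ) (hQ : ∀ n, Q n = 2 * Real.exp (-lam + 2 * ε) / q n) :
    ∀ n k : ℕ, ∀ z ∈ Metric.ball (0 : ℂ) (q' n),
      ‖etaTilde F m (k + 1) n z - etaTilde F m k n z‖ ≤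
        Real.exp ((k : ℝ) * (lam + 6 * ε)) * ‖z‖ ^ 2 * Q n :=
  etaTilde_telescoping_estimate_general lam ε hε h6 q hq0 hqtemp F hFhol hFmaps hF0 m hm hmlow hmup
    q' hq' Q hQ
end

section
/- Let r > 0 and let h : D(r) → ℂ be holomorphic with h(0) = 0 and |h(z₁) − h(z₂) − (z₁ − z₂)| ≤ (1/2)·|z₁ − z₂| for all z₁, z₂ ∈ D(r). Then: (i) (1/2)·|z₁ − z₂| ≤ |h(z₁) − h(z₂)| ≤ (3/2)·|z₁ − z₂| for all z₁, z₂ ∈ D(r), so in particular h is injective; (ii) every w ∈ D(r/4) equals h(z) for a unique z ∈ D(r/2); (iii) the resulting inverse map g : D(r/4) → D(r/2), characterized by h(g(w)) = w, is holomorphic and satisfies (2/3)·|w₁ − w₂| ≤ |g(w₁) − g(w₂)| ≤ 2·|w₁ − w₂| for all w₁, w₂ ∈ D(r/4). -/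
/-!
Since `h` is a `1/2`-perturbation of the identity, it is bi-Lipschitz, and a contraction
argument (Banach's fixed point theorem, via `ApproximatesLinearOn`) maps `D(r/2)` onto `D(r/4)`.
The derivative of `h` stays within `1/2` of `1`, hence never vanishes, so the inverse is
holomorphic by the one-variable inverse function theorem.
-/

open Metric Set Filter Topology NNReal

namespace ApproximatesLinearOn

section NormedSpace

variable {𝕜 E : Type*} [NontriviallyNormedField 𝕜] [NormedAddCommGroup E] [NormedSpace 𝕜 E]
  {f : E → E} {s : Set E} {c : ℝ≥0}

theorem norm_sub_bounds_of_id (hf : ApproximatesLinearOn f (ContinuousLinearMap.id 𝕜 E) s c)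
    {x y : E} (hx : x ∈ s) (hy : y ∈ s) :
    (1 - c) * ‖x - y‖ ≤ ‖f x - f y‖ ∧ ‖f x - f y‖ ≤ (1 + c) * ‖x - y‖ := by
  have hxy := hf x hx y hy
  rw [ContinuousLinearMap.id_apply] at hxy
  have := abs_le.mp ((abs_norm_sub_norm_le _ _).trans hxy)
  constructor <;> linarith

theorem injOn_of_id (hf : ApproximatesLinearOn f (ContinuousLinearMap.id 𝕜 E) s c) (hc : c < 1) :
    InjOn f s := by
  intro x hx y hy hxy
  have := (hf.norm_sub_bounds_of_id hx hy).1
  rw [hxy, sub_self, norm_zero] at this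
  have hc' : (0 : ℝ) < 1 - c := sub_pos.mpr (mod_cast hc)
  exact sub_eq_zero.mp (norm_le_zero_iff.mp (nonpos_of_mul_nonpos_right this hc'))

theorem surjOn_closedBall_of_id [CompleteSpace E]
    (hf : ApproximatesLinearOn f (ContinuousLinearMap.id 𝕜 E) s c) {b : E} {ε : ℝ} (ε0 : 0 ≤ ε)
    (hε : closedBall b ε ⊆ s) :
    SurjOn f (closedBall b ε) (closedBall (f b) ((1 - c) * ε)) := by
  simpa using hf.surjOn_closedBall_of_nonlinearRightInverse
    ⟨id, 1, fun y => by simp, fun y => rfl⟩ ε0 hε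

theorem surjOn_ball_of_id [CompleteSpace E]
    (hf : ApproximatesLinearOn f (ContinuousLinearMap.id 𝕜 E) s c) (hc : c < 1) {b : E} {ε : ℝ}
    (ε0 : 0 ≤ ε) (hε : closedBall b ε ⊆ s) :
    SurjOn f (ball b ε) (ball (f b) ((1 - c) * ε)) := by
  intro w hw
  obtain ⟨z, hz, rfl⟩ := hf.surjOn_closedBall_of_id ε0 hε (ball_subset_closedBall hw)
  refine ⟨z, ?_, rfl⟩
  have hlower := (hf.norm_sub_bounds_of_id (hε hz) (hε (mem_closedBall_self ε0))).1
  rw [mem_ball, dist_eq_norm] at hw ⊢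
  have hc' : (0 : ℝ) < 1 - c := sub_pos.mpr (mod_cast hc)
  exact lt_of_mul_lt_mul_left (hlower.trans_lt hw) hc'.le

end NormedSpace

section Field

variable {𝕜 : Type*} [NontriviallyNormedField 𝕜] {f g : 𝕜 → 𝕜} {s t : Set 𝕜} {c : ℝ≥0}

theorem norm_deriv_sub_one_le (hf : ApproximatesLinearOn f (ContinuousLinearMap.id 𝕜 𝕜) s c)
    {a d : 𝕜} (hs : s ∈ 𝓝 a) (hd : HasDerivAt f d a) : ‖d - 1‖ ≤ c :=
  (hd.sub (hasDerivAt_id a)).le_of_lipschitzOn hs hf.lipschitzOnWith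

theorem differentiableOn_of_rightInvOn
    (hf : ApproximatesLinearOn f (ContinuousLinearMap.id 𝕜 𝕜) s c) (hc : c < 1) (hs : IsOpen s)
    (hfd : DifferentiableOn 𝕜 f s) (ht : IsOpen t) (hgt : MapsTo g t s) (hgc : ContinuousOn g t)
    (hfg : ∀ y ∈ t, f (g y) = y) : DifferentiableOn 𝕜 g t := by
  intro y hy
  have hd := (hfd.differentiableAt (hs.mem_nhds (hgt hy))).hasDerivAt
  have hne : deriv f (g y) ≠ 0 := by
    intro h0
    have := hf.norm_deriv_sub_one_le (hs.mem_nhds (hgt hy)) hd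
    rw [h0, zero_sub, norm_neg, norm_one] at this
    exact absurd (mod_cast this : (1 : ℝ≥0) ≤ c) (not_le.mpr hc)
  exact (hd.of_local_left_inverse (hgc.continuousAt (ht.mem_nhds hy)) hne
    (eventually_of_mem (ht.mem_nhds hy) hfg)).differentiableAt.differentiableWithinAt

end Field

end ApproximatesLinearOn

/-- **Bi-Lipschitz inversion lemma.** If `h` is holomorphic on `D(r)`, fixes
`0`, and satisfies `|h z₁ - h z₂ - (z₁ - z₂)| ≤ (1/2)|z₁ - z₂|`, then `h` is
bi-Lipschitz (so injective), every point of `D(r/4)` has a unique preimage in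
`D(r/2)`, and the resulting inverse `g : D(r/4) → D(r/2)` is holomorphic and
bi-Lipschitz. -/
theorem bilipschitz_inversion
    (r : ℝ) (hr : 0 < r)
    (h : ℂ → ℂ) (hhol : DifferentiableOn ℂ h (Metric.ball 0 r)) (h0 : h 0 = 0)
    (hLip : ∀ z₁ ∈ Metric.ball (0 : ℂ) r, ∀ z₂ ∈ Metric.ball (0 : ℂ) r,
      ‖h z₁ - h z₂ - (z₁ - z₂)‖ ≤ 1 / 2 * ‖z₁ - z₂‖) :
    (∀ z₁ ∈ Metric.ball (0 : ℂ) r, ∀ z₂ ∈ Metric.ball (0 : ℂ) r,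
      1 / 2 * ‖z₁ - z₂‖ ≤ ‖h z₁ - h z₂‖ ∧
      ‖h z₁ - h z₂‖ ≤ 3 / 2 * ‖z₁ - z₂‖) ∧
    Set.InjOn h (Metric.ball 0 r) ∧
    (∀ w ∈ Metric.ball (0 : ℂ) (r / 4),
      ∃! z, z ∈ Metric.ball (0 : ℂ) (r / 2) ∧ h z = w) ∧
    ∃ g : ℂ → ℂ,
      Set.MapsTo g (Metric.ball 0 (r / 4)) (Metric.ball 0 (r / 2)) ∧
      (∀ w ∈ Metric.ball (0 : ℂ) (r / 4), h (g w) = w) ∧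
      DifferentiableOn ℂ g (Metric.ball 0 (r / 4)) ∧
      (∀ w₁ ∈ Metric.ball (0 : ℂ) (r / 4), ∀ w₂ ∈ Metric.ball (0 : ℂ) (r / 4),
        2 / 3 * ‖w₁ - w₂‖ ≤ ‖g w₁ - g w₂‖ ∧
        ‖g w₁ - g w₂‖ ≤ 2 * ‖w₁ - w₂‖) := by
  have hA : ApproximatesLinearOn h (ContinuousLinearMap.id ℂ ℂ) (ball 0 r) (1 / 2) :=
    fun x hx y hy => by simpa using hLip x hx y hy
  have hc : (1 / 2 : ℝ≥0) < 1 := by norm_num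
  have hsub : ball (0 : ℂ) (r / 2) ⊆ ball 0 r := ball_subset_ball (by linarith)
  have hbounds : ∀ z₁ ∈ ball (0 : ℂ) r, ∀ z₂ ∈ ball (0 : ℂ) r,
      1 / 2 * ‖z₁ - z₂‖ ≤ ‖h z₁ - h z₂‖ ∧ ‖h z₁ - h z₂‖ ≤ 3 / 2 * ‖z₁ - z₂‖ := by
    intro z₁ h₁ z₂ h₂
    have := hA.norm_sub_bounds_of_id h₁ h₂
    norm_num at this ⊢
    exact this
  have hsurj : SurjOn h (ball 0 (r / 2)) (ball 0 (r / 4)) := by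
    have := hA.surjOn_ball_of_id hc (by positivity : 0 ≤ r / 2)
      (closedBall_subset_ball (by linarith))
    rwa [h0, show (1 - ((1 / 2 : ℝ≥0) : ℝ)) * (r / 2) = r / 4 by norm_num; ring] at this
  set g := Function.invFunOn h (ball 0 (r / 2))
  have hgt : MapsTo g (ball 0 (r / 4)) (ball 0 (r / 2)) := hsurj.mapsTo_invFunOn
  have hhg : ∀ w ∈ ball (0 : ℂ) (r / 4), h (g w) = w := fun w hw => hsurj.rightInvOn_invFunOn hw
  have hgbounds : ∀ w₁ ∈ ball (0 : ℂ) (r / 4), ∀ w₂ ∈ ball (0 : ℂ) (r / 4),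
      2 / 3 * ‖w₁ - w₂‖ ≤ ‖g w₁ - g w₂‖ ∧ ‖g w₁ - g w₂‖ ≤ 2 * ‖w₁ - w₂‖ := by
    intro w₁ h₁ w₂ h₂
    have := hbounds _ (hsub (hgt h₁)) _ (hsub (hgt h₂))
    rw [hhg w₁ h₁, hhg w₂ h₂] at this
    constructor <;> linarith [this.1, this.2]
  have hgc : ContinuousOn g (ball 0 (r / 4)) :=
    (LipschitzOnWith.of_dist_le_mul (K := 2) fun x hx y hy => by
      simpa [dist_eq_norm] using (hgbounds x hx y hy).2).continuousOn
  refine ⟨hbounds, hA.injOn_of_id hc, fun w hw => ?_, g, hgt, hhg,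
    hA.differentiableOn_of_rightInvOn hc isOpen_ball hhol isOpen_ball (hgt.mono_right hsub) hgc hhg,
    hgbounds⟩
  obtain ⟨z, hz, rfl⟩ := hsurj hw
  exact ⟨z, ⟨hz, rfl⟩, fun z' hz' => hA.injOn_of_id hc (hsub hz'.1) (hsub hz) hz'.2⟩
end

section
/- Let M be a compact metric space and let 𝔉 be a set of continuous maps ℂ → M that is compact in the topology of uniform convergence on compact subsets of ℂ. Assume that for all ξ, η ∈ 𝔉 with ξ(0) = η(0) there exists θ ∈ ℝ such that η(z) = ξ(e^{iθ}·z) for all z ∈ ℂ. Then for every ξ ∈ 𝔉, every ε > 0 and every r > 0 there exists an open neighborhood V of ξ(0) in M such that for every η ∈ 𝔉 with η(0) ∈ V there exists θ ∈ ℝ with dist(η(e^{iθ}·z), ξ(z)) ≤ ε for all z ∈ ℂ with |z| ≤ r. -/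
/-!
The members of `𝔉` that are `ε`-close to `ξ` on the closed `r`-disk after some rotation form an
open set `W` of `C(ℂ, M)`, and by the rotation hypothesis `W` contains the whole fibre of
`η ↦ η 0` over `ξ 0` in `𝔉`. Since `𝔉 \ W` is compact, its image under evaluation at `0` is a
closed set missing `ξ 0`; its complement is the required neighbourhood `V`.
-/

open Set

theorem IsCompact.exists_isOpen_inter_preimage_subset {A B : Type*} [TopologicalSpace A]
    [TopologicalSpace B] [T2Space B] {S W : Set A} (hS : IsCompact S) {e : A → B}
    (he : ContinuousOn e S) (hW : IsOpen W) {y : B} (hy : S ∩ e ⁻¹' {y} ⊆ W) :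
    ∃ V : Set B, IsOpen V ∧ y ∈ V ∧ S ∩ e ⁻¹' V ⊆ W := by
  refine ⟨(e '' (S \ W))ᶜ,
    ((hS.diff hW).image_of_continuousOn (he.mono sdiff_subset)).isClosed.isOpen_compl, ?_, ?_⟩
  · rintro ⟨a, ⟨haS, haW⟩, rfl⟩
    exact haW (hy ⟨haS, rfl⟩)
  · rintro a ⟨haS, haV⟩
    by_contra haW
    exact haV ⟨a, ⟨haS, haW⟩, rfl⟩

theorem ContinuousMap.isOpen_setOf_forall_dist_lt {X M : Type*} [TopologicalSpace X]
    [LocallyCompactSpace X] [PseudoMetricSpace M] (f : C(X, M)) {K : Set X} (hK : IsCompact K)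
    (ε : ℝ) : IsOpen {g : C(X, M) | ∀ x ∈ K, dist (g x) (f x) < ε} := by
  let D : C(X, M) → C(X, ℝ) := fun g ↦ ⟨fun x ↦ dist (g x) (f x), by fun_prop⟩
  have hD : Continuous D :=
    continuous_of_continuous_uncurry _ (by dsimp [D, Function.uncurry]; fun_prop)
  exact (isOpen_setOfPred_mapsTo hK isOpen_Iio).preimage hD

theorem compact_family_rotation_closeness_general
    {M : Type*} [MetricSpace M]
    (𝔉 : Set C(ℂ, M)) (hcompact : IsCompact 𝔉)
    (hrot : ∀ ξ ∈ 𝔉, ∀ η ∈ 𝔉, ξ 0 = η 0 →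
      ∃ θ : ℝ, ∀ z : ℂ, η z = ξ (Complex.exp (θ * Complex.I) * z)) :
    ∀ ξ ∈ 𝔉, ∀ ε : ℝ, 0 < ε → ∀ r : ℝ, 0 < r →
      ∃ V : Set M, IsOpen V ∧ ξ 0 ∈ V ∧
        ∀ η ∈ 𝔉, η 0 ∈ V →
          ∃ θ : ℝ, ∀ z : ℂ, ‖z‖ ≤ r →
            dist (η (Complex.exp (θ * Complex.I) * z)) (ξ z) ≤ ε := by
  intro ξ hξ ε hε r _
  let rotate (θ : ℝ) : C(ℂ, ℂ) := ContinuousMap.mulLeft (Complex.exp (θ * Complex.I))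
  let W := ⋃ θ : ℝ, (fun η : C(ℂ, M) ↦ η.comp (rotate θ)) ⁻¹'
    {g | ∀ z ∈ Metric.closedBall 0 r, dist (g z) (ξ z) < ε}
  have hW : IsOpen W := isOpen_iUnion fun θ ↦
    (ξ.isOpen_setOf_forall_dist_lt (isCompact_closedBall 0 r) ε).preimage
      (ContinuousMap.continuous_precomp _)
  have hfiber : 𝔉 ∩ (fun η : C(ℂ, M) ↦ η 0) ⁻¹' {ξ 0} ⊆ W := by
    rintro η ⟨hη, hη0⟩
    obtain ⟨θ, hθ⟩ := hrot η hη ξ hξ hη0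
    exact mem_iUnion.2 ⟨θ, fun z _ ↦ by simp [rotate, ← hθ z, hε]⟩
  obtain ⟨V, hV, hξV, hVW⟩ := hcompact.exists_isOpen_inter_preimage_subset
    (continuous_eval_const 0).continuousOn hW hfiber
  refine ⟨V, hV, hξV, fun η hη hηV ↦ ?_⟩
  obtain ⟨θ, hθ⟩ := mem_iUnion.1 (hVW ⟨hη, hηV⟩)
  exact ⟨θ, fun z hz ↦ (hθ z (mem_closedBall_zero_iff.2 hz)).le⟩

/-- **Continuity of the family of parametrized unstable manifolds.**
Let `𝔉` be a compact family (for the topology of uniform convergence on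
compact subsets of `ℂ`, i.e. the compact-open topology) of continuous maps
`ℂ → M` into a compact metric space, such that any two members sharing their
value at `0` agree up to a rotation of the variable. Then for every `ξ ∈ 𝔉`,
`ε > 0` and `r > 0` there is a neighborhood `V` of `ξ 0` such that every
`η ∈ 𝔉` with `η 0 ∈ V` is `ε`-close to `ξ` on the disk of radius `r`, after
composition with a rotation. -/
theorem compact_family_rotation_closeness
    {M : Type*} [MetricSpace M] [CompactSpace M]
    (𝔉 : Set C(ℂ, M)) (hcompact : IsCompact 𝔉)
    (hrot : ∀ ξ ∈ 𝔉, ∀ η ∈ 𝔉, ξ 0 = η 0 →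
      ∃ θ : ℝ, ∀ z : ℂ, η z = ξ (Complex.exp (θ * Complex.I) * z)) :
    ∀ ξ ∈ 𝔉, ∀ ε : ℝ, 0 < ε → ∀ r : ℝ, 0 < r →
      ∃ V : Set M, IsOpen V ∧ ξ 0 ∈ V ∧
        ∀ η ∈ 𝔉, η 0 ∈ V →
          ∃ θ : ℝ, ∀ z : ℂ, ‖z‖ ≤ r →
            dist (η (Complex.exp (θ * Complex.I) * z)) (ξ z) ≤ ε :=
  compact_family_rotation_closeness_general 𝔉 hcompact hrot
end

section
/- Let B be a ℤ-valued symmetric bilinear form on ℤ² that is nondegenerate (the determinant of its Gram matrix is nonzero) and isotropic: there exists a nonzero vector v ∈ ℤ² with B(v,v) = 0. Then the group of ℤ-linear automorphisms g of ℤ² satisfying B(g(u), g(w)) = B(u,w) for all u, w ∈ ℤ² is finite. -/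
/-!
If `e` and `e'` are isotropic, expanding `B v v` in the basis `e, e'` (Cramer's rule) gives
`cross e e' ^ 2 * B v v = 2 * B e e' * cross v e' * cross e v`. So once `B e e' ≠ 0`, which
nondegeneracy lets us arrange, every isotropic vector lies on one of the two rational lines
through `e` and `e'`. A rational line contains only two unimodular (primitive) vectors, and
isometries preserve isotropy and unimodularity. Taking `e` and `e'` primitive, an isometry is
determined by the images of these two independent vectors, which range over a finite set.
-/

section Unimodular

variable (R : Type*) {M N : Type*} [CommRing R] [AddCommGroup M] [Module R M]
  [AddCommGroup N] [Module R N]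

def IsUnimodular (v : M) : Prop := ∃ φ : Module.Dual R M, φ v = 1

variable {R}

theorem IsUnimodular.map {v : M} (hv : IsUnimodular R v) (g : M ≃ₗ[R] N) :
    IsUnimodular R (g v) := by
  obtain ⟨φ, hφ⟩ := hv
  exact ⟨φ ∘ₗ g.symm.toLinearMap, by simpa using hφ⟩

theorem IsUnimodular.ne_zero [Nontrivial R] {v : M} (hv : IsUnimodular R v) : v ≠ 0 := by
  rintro rfl
  obtain ⟨φ, hφ⟩ := hv
  simp at hφ

end Unimodular

section Cross

variable {R : Type*} [CommRing R]

def cross (u v : Fin 2 → R) : R := u 0 * v 1 - u 1 * v 0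

theorem cross_smul_eq (u v x : Fin 2 → R) :
    cross u v • x = cross x v • u + cross u x • v := by
  ext i
  fin_cases i <;>
    simp only [cross, Fin.zero_eta, Fin.mk_one, Pi.smul_apply, smul_eq_mul, Pi.add_apply] <;>
    ring

theorem smul_eq_smul_of_cross_eq_zero {u v : Fin 2 → R} (h : cross u v = 0) (i : Fin 2) :
    u i • v = v i • u := by
  unfold cross at h
  ext j
  fin_cases i <;> fin_cases j <;> simp only [Pi.smul_apply, smul_eq_mul] <;> grind

theorem apply_smul_eq_apply_smul_of_cross_eq_zero {v w : Fin 2 → R} (h : cross v w = 0)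
    (φ : Module.Dual R (Fin 2 → R)) : φ v • w = φ w • v := by
  rw [LinearMap.pi_apply_eq_sum_univ φ v, LinearMap.pi_apply_eq_sum_univ φ w, Finset.sum_smul,
    Finset.sum_smul]
  refine Finset.sum_congr rfl fun i _ => ?_
  rw [smul_assoc, smul_assoc, smul_comm, smul_eq_smul_of_cross_eq_zero h, smul_comm]

theorem isUnimodular_of_isCoprime {v : Fin 2 → R} (h : IsCoprime (v 0) (v 1)) :
    IsUnimodular R v := by
  obtain ⟨a, b, hab⟩ := h
  exact ⟨a • LinearMap.proj 0 + b • LinearMap.proj 1, by simpa using hab⟩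

theorem IsUnimodular.exists_unit_smul_eq {v w : Fin 2 → R} (hv : IsUnimodular R v)
    (hw : IsUnimodular R w) (h : cross v w = 0) : ∃ u : Rˣ, u • v = w := by
  obtain ⟨φ, hφ⟩ := hv
  obtain ⟨ψ, hψ⟩ := hw
  have hwv : φ w • v = w := by
    rw [← apply_smul_eq_apply_smul_of_cross_eq_zero h φ, hφ, one_smul]
  have hvw : ψ v • w = v := by
    rw [apply_smul_eq_apply_smul_of_cross_eq_zero h ψ, hψ, one_smul]
  have hunit : ψ v * φ w = 1 := by
    simpa [hφ] using congrArg φ hvw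
  exact ⟨(IsUnit.of_mul_eq_one_right _ hunit).unit, hwv⟩

variable [IsDomain R]

theorem cross_eq_zero_of_cross_eq_zero {e v w : Fin 2 → R} (he : e ≠ 0)
    (hv : cross e v = 0) (hw : cross e w = 0) : cross v w = 0 := by
  unfold cross at *
  have h0 : e 0 * (v 0 * w 1 - v 1 * w 0) = 0 := by linear_combination v 0 * hw - w 0 * hv
  have h1 : e 1 * (v 0 * w 1 - v 1 * w 0) = 0 := by linear_combination v 1 * hw - w 1 * hv
  by_contra h
  exact he (funext fun i => by fin_cases i <;> simp_all)

theorem LinearMap.ext_of_cross_ne_zero {M : Type*} [AddCommGroup M] [Module R M]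
    [Module.IsTorsionFree R M] {f g : (Fin 2 → R) →ₗ[R] M} {u v : Fin 2 → R}
    (hu : f u = g u) (hv : f v = g v) (huv : cross u v ≠ 0) : f = g :=
  LinearMap.ext fun x => smul_right_injective M huv <| by
    dsimp only
    rw [← map_smul, ← map_smul, cross_smul_eq u v x]
    simp only [map_add, map_smul, hu, hv]

theorem finite_setOf_isUnimodular_cross_eq_zero [Finite Rˣ] {e : Fin 2 → R} (he : e ≠ 0) :
    {v | IsUnimodular R v ∧ cross e v = 0}.Finite := by
  rcases Set.eq_empty_or_nonempty {v | IsUnimodular R v ∧ cross e v = 0} with h | ⟨p, hp, hep⟩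
  · simp [h]
  refine (Set.finite_range fun u : Rˣ => u • p).subset fun v ⟨hv, hev⟩ => ?_
  exact hp.exists_unit_smul_eq hv (cross_eq_zero_of_cross_eq_zero he hep hev)

end Cross

theorem exists_isUnimodular_smul_eq {v : Fin 2 → ℤ} (hv : v ≠ 0) :
    ∃ d : ℤ, d ≠ 0 ∧ ∃ p, IsUnimodular ℤ p ∧ v = d • p := by
  have hd : 0 < Int.gcd (v 0) (v 1) := by
    refine Int.gcd_pos_iff.mpr (not_and_or.mp fun h => hv ?_)
    ext i; fin_cases i <;> simp [h.1, h.2]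
  refine ⟨Int.gcd (v 0) (v 1), by exact_mod_cast hd.ne', fun i => v i / Int.gcd (v 0) (v 1),
    isUnimodular_of_isCoprime (Int.isCoprime_iff_gcd_eq_one.mpr (Int.gcd_div_gcd_div_gcd hd)), ?_⟩
  ext i
  fin_cases i
  · exact (Int.mul_ediv_cancel' (Int.gcd_dvd_left _ _)).symm
  · exact (Int.mul_ediv_cancel' (Int.gcd_dvd_right _ _)).symm

section Isotropic

variable {R : Type*} [CommRing R] (B : (Fin 2 → R) →ₗ[R] (Fin 2 → R) →ₗ[R] R)

theorem cross_sq_mul_apply_self (hB : ∀ u w, B u w = B w u) (e e' v : Fin 2 → R) :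
    cross e e' ^ 2 * B v v = cross v e' ^ 2 * B e e + 2 * cross v e' * cross e v * B e e'
      + cross e v ^ 2 * B e' e' := by
  calc cross e e' ^ 2 * B v v = B (cross e e' • v) (cross e e' • v) := by
        simp only [map_smul, LinearMap.smul_apply, smul_eq_mul]; ring
    _ = _ := by
      rw [cross_smul_eq e e' v]
      simp only [map_add, map_smul, LinearMap.add_apply, LinearMap.smul_apply, smul_eq_mul,
        hB e' e]
      ring

variable [IsDomain R]

theorem cross_ne_zero_of_apply_ne_zero {u v : Fin 2 → R} (hu : B u u = 0) (huv : B u v ≠ 0) :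
    cross u v ≠ 0 := by
  intro h
  obtain ⟨i, hi⟩ : ∃ i, u i ≠ 0 := by
    by_contra! h0
    exact huv (by rw [show u = 0 from funext h0, map_zero, LinearMap.zero_apply])
  apply huv
  refine (mul_eq_zero.mp ?_).resolve_left hi
  rw [← smul_eq_mul, ← map_smul, smul_eq_smul_of_cross_eq_zero h, map_smul, hu, smul_zero]

variable [NeZero (2 : R)] {B}

theorem cross_eq_zero_or_cross_eq_zero_of_isotropic (hB : ∀ u w, B u w = B w u)
    {e e' v : Fin 2 → R} (he : B e e = 0) (he' : B e' e' = 0) (hee' : B e e' ≠ 0)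
    (hv : B v v = 0) : cross e v = 0 ∨ cross e' v = 0 := by
  have key := cross_sq_mul_apply_self B hB e e' v
  rw [he, he', hv] at key
  have : (2 * B e e') * (cross e v * cross e' v) = 0 := by
    unfold cross at *; linear_combination key
  exact mul_eq_zero.mp ((mul_eq_zero.mp this).resolve_left (mul_ne_zero two_ne_zero hee'))

theorem exists_isotropic_apply_ne_zero (hB : ∀ u w, B u w = B w u) (hsep : B.SeparatingLeft)
    {e : Fin 2 → R} (he0 : e ≠ 0) (he : B e e = 0) : ∃ e', B e' e' = 0 ∧ B e e' ≠ 0 := by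
  obtain ⟨w, hw⟩ : ∃ w, B e w ≠ 0 := by
    by_contra! h
    exact he0 (hsep e h)
  -- `B w w` times the second point where the line `t ↦ e + t • w` meets the isotropic cone
  refine ⟨B w w • e - (2 * B e w) • w, ?_, ?_⟩
  · simp only [map_sub, map_smul, LinearMap.sub_apply, LinearMap.smul_apply, smul_eq_mul, he,
      hB w e]
    ring
  · simp only [map_sub, map_smul, smul_eq_mul, he]
    simpa [two_ne_zero] using hw

end Isotropic

theorem exists_isUnimodular_isotropic_pair {B : (Fin 2 → ℤ) →ₗ[ℤ] (Fin 2 → ℤ) →ₗ[ℤ] ℤ}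
    (hB : ∀ u w, B u w = B w u) (hsep : B.SeparatingLeft) (hiso : ∃ v, v ≠ 0 ∧ B v v = 0) :
    ∃ p p', IsUnimodular ℤ p ∧ IsUnimodular ℤ p' ∧ B p p = 0 ∧ B p' p' = 0 ∧ B p p' ≠ 0 := by
  obtain ⟨e, he0, he⟩ := hiso
  obtain ⟨d, hd, p, hp, rfl⟩ := exists_isUnimodular_smul_eq he0
  have hpp : B p p = 0 := by
    simpa only [map_smul, LinearMap.smul_apply, smul_eq_mul, mul_eq_zero, hd, false_or] using he
  obtain ⟨e', he', hpe'⟩ := exists_isotropic_apply_ne_zero hB hsep hp.ne_zero hpp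
  obtain ⟨d', hd', p', hp', rfl⟩ := exists_isUnimodular_smul_eq (v := e')
    fun h => hpe' (by rw [h, map_zero])
  refine ⟨p, p', hp, hp', hpp, ?_, fun h => hpe' (by rw [map_smul, h, smul_zero])⟩
  simpa only [map_smul, LinearMap.smul_apply, smul_eq_mul, mul_eq_zero, hd', false_or] using he'

/-- **Isotropic rank-2 lattices have finite isometry groups.** If `B` is a
nondegenerate, symmetric, `ℤ`-valued bilinear form on `ℤ²` which represents
`0` non-trivially, then the group of `ℤ`-linear automorphisms of `ℤ²`
preserving `B` is finite. -/
theorem isometry_group_finite_of_isotropic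
    (B : (Fin 2 → ℤ) →ₗ[ℤ] (Fin 2 → ℤ) →ₗ[ℤ] ℤ)
    (hsymm : ∀ u w, B u w = B w u)
    (hnondeg : (Matrix.of fun i j => B (Pi.single i 1) (Pi.single j 1)).det ≠ 0)
    (hiso : ∃ v : Fin 2 → ℤ, v ≠ 0 ∧ B v v = 0) :
    {g : (Fin 2 → ℤ) ≃ₗ[ℤ] (Fin 2 → ℤ) | ∀ u w, B (g u) (g w) = B u w}.Finite := by
  have hsep : B.SeparatingLeft :=
    LinearMap.separatingLeft_of_det_ne_zero (Pi.basisFun ℤ (Fin 2)) <| by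
      convert hnondeg using 2
      ext i j
      simp [LinearMap.toMatrix₂_apply]
  obtain ⟨p, p', hp, hp', hpp, hpp', hpp'₀⟩ := exists_isUnimodular_isotropic_pair hsymm hsep hiso
  have hfin : {v | IsUnimodular ℤ v ∧ B v v = 0}.Finite :=
    ((finite_setOf_isUnimodular_cross_eq_zero hp.ne_zero).union
      (finite_setOf_isUnimodular_cross_eq_zero hp'.ne_zero)).subset fun v ⟨hv, hvv⟩ =>
        (cross_eq_zero_or_cross_eq_zero_of_isotropic hsymm hpp hpp' hpp'₀ hvv).imp
          (⟨hv, ·⟩) (⟨hv, ·⟩)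
  refine Set.Finite.of_finite_image (f := fun g => (g p, g p')) ((hfin.prod hfin).subset ?_) ?_
  · rintro _ ⟨g, hg, rfl⟩
    exact ⟨⟨hp.map g, by rw [hg, hpp]⟩, ⟨hp'.map g, by rw [hg, hpp']⟩⟩
  · intro g _ g' _ h
    simp only [Prod.mk.injEq] at h
    exact LinearEquiv.toLinearMap_injective <|
      LinearMap.ext_of_cross_ne_zero h.1 h.2 (cross_ne_zero_of_apply_ne_zero B hpp hpp'₀)
end

section
/- Let B be a ℤ-valued symmetric bilinear form on ℤ² whose Gram matrix has negative determinant (so B is nondegenerate of signature (1,1)), and assume B is anisotropic: B(v,v) ≠ 0 for every nonzero v ∈ ℤ². Then the group of ℤ-linear automorphisms g of ℤ² satisfying B(g(u), g(w)) = B(u,w) for all u, w ∈ ℤ² is infinite. -/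
/-!
A symmetric form on `ℤ²` has Gram matrix `G = !![α, β; β, γ]`, and `det G < 0` says that
`d = β² - αγ` is positive. Anisotropy forces `α ≠ 0` and `d` not to be a square (a square root `k`
of `d` would give the isotropic vector `(β + k, -α)`). Every solution of the Pell equation
`t² - d u² = 1` gives an integral isometry of `G`, and these isometries are pairwise distinct;
since `d` is a positive non-square, there are infinitely many Pell solutions.
-/

open Matrix

theorem Matrix.toLinearMap₂'_mulVec_mulVec {R n : Type*} [CommSemiring R] [Fintype n]
    [DecidableEq n] {G P : Matrix n n R} (hP : Pᵀ * G * P = G) (u w : n → R) :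
    toLinearMap₂' R G (P *ᵥ u) (P *ᵥ w) = toLinearMap₂' R G u w := by
  conv_rhs => rw [← hP]
  rw [toLinearMap₂'_apply', toLinearMap₂'_apply', ← mulVec_mulVec, ← mulVec_mulVec,
    dotProduct_mulVec u, vecMul_transpose]

theorem exists_eq_toLinearMap₂'_fin_two_of_symm {R : Type*} [CommSemiring R]
    (B : (Fin 2 → R) →ₗ[R] (Fin 2 → R) →ₗ[R] R) (hB : ∀ u w, B u w = B w u) :
    ∃ α β γ : R, B = toLinearMap₂' R !![α, β; β, γ] := by
  refine ⟨B (Pi.single 0 1) (Pi.single 0 1), B (Pi.single 0 1) (Pi.single 1 1),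
    B (Pi.single 1 1) (Pi.single 1 1), ?_⟩
  rw [← toLinearMap₂'_toMatrix' (R := R) B]
  congr 1
  ext i j
  fin_cases i <;> fin_cases j <;> simp [hB (Pi.single 1 1)]

theorem toLinearMap₂'_fin_two_apply_self {R : Type*} [CommSemiring R] (α β γ : R)
    (v : Fin 2 → R) :
    toLinearMap₂' R !![α, β; β, γ] v v = α * v 0 ^ 2 + 2 * β * v 0 * v 1 + γ * v 1 ^ 2 := by
  simp only [toLinearMap₂'_apply', dotProduct, mulVec, Fin.sum_univ_two, of_apply, cons_val',
    cons_val_zero, cons_val_one, empty_val', cons_val_fin_one]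
  ring

theorem ne_zero_of_anisotropic {R : Type*} [CommSemiring R] [Nontrivial R] {α β γ : R}
    (h : ∀ v : Fin 2 → R, v ≠ 0 → toLinearMap₂' R !![α, β; β, γ] v v ≠ 0) : α ≠ 0 := by
  simpa [toLinearMap₂'_fin_two_apply_self] using h (Pi.single 0 1) (by simp)

theorem not_isSquare_of_anisotropic {R : Type*} [CommRing R] [Nontrivial R] {α β γ : R}
    (h : ∀ v : Fin 2 → R, v ≠ 0 → toLinearMap₂' R !![α, β; β, γ] v v ≠ 0) :
    ¬IsSquare (β ^ 2 - α * γ) := by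
  rintro ⟨k, hk⟩
  refine h ![β + k, -α] (by simp [ne_zero_of_anisotropic h]) ?_
  rw [toLinearMap₂'_fin_two_apply_self]
  simp only [cons_val_zero, cons_val_one]
  linear_combination (-α) * hk

theorem Pell.Solution₁.infinite_of_not_isSquare {d : ℤ} (h₀ : 0 < d) (hd : ¬IsSquare d) :
    Infinite (Pell.Solution₁ d) := by
  obtain ⟨a, ha⟩ := Pell.IsFundamental.exists_of_not_isSquare h₀ hd
  exact Infinite.of_injective (fun n : ℤ => a ^ n)
    fun _ _ h => ha.y_strictMono.injective (congrArg Pell.Solution₁.y h)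

/-- The matrix `t + u N` with `N = !![-β, -γ; α, β]`. Since `N ^ 2 = β ^ 2 - α * γ` and
`!![α, β; β, γ] * N` is skew-symmetric, `t + u √(β ^ 2 - α * γ) ↦ t + u N` sends Pell solutions
to isometries of `!![α, β; β, γ]`. -/
def pellAutomorph (α β γ : ℤ) (s : Pell.Solution₁ (β ^ 2 - α * γ)) :
    SpecialLinearGroup (Fin 2) ℤ :=
  ⟨!![s.x - β * s.y, -(γ * s.y); α * s.y, s.x + β * s.y], by
    rw [det_fin_two_of]
    linear_combination s.prop⟩

theorem pellAutomorph_transpose_mul_mul (α β γ : ℤ) (s : Pell.Solution₁ (β ^ 2 - α * γ)) :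
    (pellAutomorph α β γ s : Matrix (Fin 2) (Fin 2) ℤ)ᵀ * !![α, β; β, γ] *
      pellAutomorph α β γ s = !![α, β; β, γ] := by
  ext i j
  fin_cases i <;> fin_cases j <;> simp [pellAutomorph, mul_apply, Fin.sum_univ_two]
  · linear_combination α * s.prop
  · linear_combination β * s.prop
  · linear_combination β * s.prop
  · linear_combination γ * s.prop

theorem pellAutomorph_injective {α β γ : ℤ} (hα : α ≠ 0) :
    Function.Injective (pellAutomorph α β γ) := by
  intro s t hst
  have h := congrArg (fun P : SpecialLinearGroup (Fin 2) ℤ => (P : Matrix (Fin 2) (Fin 2) ℤ)) hst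
  have h10 := congrFun₂ h 1 0
  have h00 := congrFun₂ h 0 0
  simp only [pellAutomorph, of_apply, cons_val', cons_val_zero, cons_val_one, empty_val',
    cons_val_fin_one] at h10 h00
  have hy : s.y = t.y := mul_left_cancel₀ hα h10
  exact Pell.Solution₁.ext (by linear_combination h00 + β * hy) hy

/-- **Anisotropic hyperbolic rank-2 lattices have infinite isometry groups.**
If `B` is a symmetric `ℤ`-valued bilinear form on `ℤ²` whose Gram matrix has
negative determinant (signature `(1,1)`) and which does not represent `0`
non-trivially, then the group of `ℤ`-linear automorphisms of `ℤ²` preserving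
`B` is infinite. -/
theorem isometry_group_infinite_of_anisotropic
    (B : (Fin 2 → ℤ) →ₗ[ℤ] (Fin 2 → ℤ) →ₗ[ℤ] ℤ)
    (hsymm : ∀ u w, B u w = B w u)
    (hdet : (Matrix.of fun i j => B (Pi.single i 1) (Pi.single j 1)).det < 0)
    (haniso : ∀ v : Fin 2 → ℤ, v ≠ 0 → B v v ≠ 0) :
    {g : (Fin 2 → ℤ) ≃ₗ[ℤ] (Fin 2 → ℤ) | ∀ u w, B (g u) (g w) = B u w}.Infinite := by
  change (LinearMap.toMatrix₂' ℤ B).det < 0 at hdet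
  obtain ⟨α, β, γ, rfl⟩ := exists_eq_toLinearMap₂'_fin_two_of_symm B hsymm
  have hd : 0 < β ^ 2 - α * γ := by
    rw [LinearMap.toMatrix'_toLinearMap₂', det_fin_two_of] at hdet
    linarith
  have : Infinite (Pell.Solution₁ (β ^ 2 - α * γ)) :=
    Pell.Solution₁.infinite_of_not_isSquare hd (not_isSquare_of_anisotropic haniso)
  exact Set.infinite_of_injective_forall_mem (f := fun s => (pellAutomorph α β γ s).toLin')
    (SpecialLinearGroup.toLin'_injective.comp
      (pellAutomorph_injective (ne_zero_of_anisotropic haniso)))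
    fun s => toLinearMap₂'_mulVec_mulVec (pellAutomorph_transpose_mul_mul α β γ s)
end
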